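/- arXiv:1905.07938 — 6 statements merged into one kernel-verified Lean document; each statement's English description precedes it below -/
import Mathlib

section
/- Let (α,β) ∈ [0,1]² with β ≥ min(2α,1). Then there exists a set A ⊆ ℕ of positive integers such that the asymptotic density d(A) exists and equals α, and the asymptotic density d(A+A) exists and equals β. -/
open Filter Topology Pointwise

/-!
Fix an irrational `θ` and write `{x}` for `Int.fract x`. By equidistribution of `{nθ}`, the set
`fracBelow θ x = {n > 0 | {nθ} < x}` has density `min x 1`, and `{(a + b)θ} ≤ {aθ} + {bθ}` puts
`fracBelow θ x + fracBelow θ y` inside `fracBelow θ (x + y)`.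

For `α > 0` take `A = fracBelow θ α ∪ Q`, where `Q ⊆ fracBelow θ (β - α)` has `o(√N)` elements up
to `N`, so that `Q` and `Q + Q` have density zero, yet its values `{qθ}` contain arbitrarily fine
nets of `[0, β - α)`. Then `A + A ⊆ fracBelow θ β ∪ (Q + Q)`; conversely, every large `n` with
`{nθ}` in a compact subinterval of `(0, β)` is `(n - q) + q` for some `q ∈ A` with
`{nθ} - α < {qθ} < {nθ}`, so that `{(n - q)θ} = {nθ} - {qθ} < α`.

For `α = 0` replace `fracBelow θ α` by `P = {p > 0 | {pθ} < ε p}`, where `ε` decreases to zero so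
slowly that `Q ∩ [1, n)` is an `ε n`-net of `[0, β)`. Then `P` has density zero and the same
covering argument applies, while the finitely many `p ∈ P` with `ε p` not yet small add a set of
density zero to `A + A`.
-/

open Set

section FractionalPart

variable {R : Type*} [CommRing R] [LinearOrder R] [IsStrictOrderedRing R] [FloorRing R]

theorem Int.fract_sub_eq_sub_of_le {a b : R} (h : Int.fract a ≤ Int.fract b) :
    Int.fract (b - a) = Int.fract b - Int.fract a := by
  refine Int.fract_eq_iff.2 ⟨sub_nonneg.2 h, ?_, ⌊b⌋ - ⌊a⌋, ?_⟩
  · linarith [Int.fract_lt_one b, Int.fract_nonneg a]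
  · simp only [Int.fract]; push_cast; ring

theorem Int.ite_fract_add_lt_one (a b : R) :
    (if Int.fract a + Int.fract b < 1 then (1 : R) else 0) =
      1 - Int.fract a - Int.fract b + Int.fract (a + b) := by
  have ha := Int.fract_nonneg a
  have hb := Int.fract_nonneg b
  split_ifs with h
  · have : Int.fract (a + b) = Int.fract a + Int.fract b :=
      Int.fract_eq_iff.2 ⟨by linarith, h, ⌊a⌋ + ⌊b⌋, by simp only [Int.fract]; push_cast; ring⟩
    rw [this]; ring
  · have : Int.fract (a + b) = Int.fract a + Int.fract b - 1 :=
      Int.fract_eq_iff.2 ⟨by linarith, by linarith [Int.fract_lt_one a, Int.fract_lt_one b],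
        ⌊a⌋ + ⌊b⌋ + 1, by simp only [Int.fract]; push_cast; ring⟩
    rw [this]; ring

end FractionalPart

section Density

noncomputable def partialDensity (A : Set ℕ) (N : ℕ) : ℝ := ((A ∩ Icc 1 N).ncard : ℝ) / N

def HasDensity (A : Set ℕ) (x : ℝ) : Prop := Tendsto (partialDensity A) atTop (𝓝 x)

lemma partialDensity_nonneg (A : Set ℕ) (N : ℕ) : 0 ≤ partialDensity A N := by
  unfold partialDensity; positivity

lemma partialDensity_le_one (A : Set ℕ) (N : ℕ) : partialDensity A N ≤ 1 := by
  refine div_le_one_of_le₀ ?_ N.cast_nonneg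
  have := Set.ncard_inter_le_ncard_right A (Icc 1 N)
  rw [Set.ncard_Icc_nat, Nat.add_sub_cancel] at this
  exact_mod_cast this

lemma partialDensity_mono {A B : Set ℕ} (h : A ⊆ B) (N : ℕ) :
    partialDensity A N ≤ partialDensity B N := by
  unfold partialDensity
  gcongr
  exact (finite_Icc 1 N).inter_of_right _

lemma partialDensity_union_le (A B : Set ℕ) (N : ℕ) :
    partialDensity (A ∪ B) N ≤ partialDensity A N + partialDensity B N := by
  unfold partialDensity
  rw [← add_div, union_inter_distrib_right]
  gcongr
  exact_mod_cast Set.ncard_union_le _ _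

lemma HasDensity.union_zero {A B : Set ℕ} (hA : HasDensity A 0) (hB : HasDensity B 0) :
    HasDensity (A ∪ B) 0 :=
  squeeze_zero (partialDensity_nonneg _) (partialDensity_union_le A B) (by simpa using hA.add hB)

lemma ncard_inter_Icc_le_of_subset_Iic {F : Set ℕ} {K : ℕ} (hF : F ⊆ Iic K) (N : ℕ) :
    (F ∩ Icc 1 N).ncard ≤ K := by
  calc (F ∩ Icc 1 N).ncard ≤ (Icc 1 K).ncard :=
        Set.ncard_le_ncard fun n hn => ⟨hn.2.1, hF hn.1⟩
    _ = K := by simp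

lemma hasDensity_Iic (K : ℕ) : HasDensity (Iic K) 0 := by
  refine squeeze_zero (partialDensity_nonneg _) (fun N => ?_)
    (tendsto_const_div_atTop_nhds_zero_nat (K : ℝ))
  unfold partialDensity
  gcongr
  exact_mod_cast ncard_inter_Icc_le_of_subset_Iic subset_rfl N

lemma ncard_add_inter_Icc_le {S T : Set ℕ} (hS : ∀ s ∈ S, 0 < s) (hT : ∀ t ∈ T, 0 < t)
    (N : ℕ) : ((S + T) ∩ Icc 1 N).ncard ≤ (S ∩ Icc 1 N).ncard * (T ∩ Icc 1 N).ncard := by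
  have hsub : (S + T) ∩ Icc 1 N ⊆
      (fun p : ℕ × ℕ => p.1 + p.2) '' ((S ∩ Icc 1 N) ×ˢ (T ∩ Icc 1 N)) := by
    rintro _ ⟨⟨s, hs, t, ht, rfl⟩, -, hN⟩
    have := hS s hs
    have := hT t ht
    dsimp only at hN
    exact ⟨(s, t), ⟨⟨hs, by omega, by omega⟩, ht, by omega, by omega⟩, rfl⟩
  calc _ ≤ _ := Set.ncard_le_ncard hsub
    _ ≤ _ := Set.ncard_image_le (Set.toFinite _)
    _ = _ := Set.ncard_prod

lemma HasDensity.add_zero_of_subset_Iic {F Z : Set ℕ} {K : ℕ} (hF : F ⊆ Iic K)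
    (hF₀ : ∀ f ∈ F, 0 < f) (hZ₀ : ∀ z ∈ Z, 0 < z) (hZ : HasDensity Z 0) :
    HasDensity (F + Z) 0 := by
  refine squeeze_zero (partialDensity_nonneg _) (fun N => ?_) (by simpa using hZ.const_mul (K : ℝ))
  unfold partialDensity
  rw [mul_div_assoc']
  gcongr
  exact_mod_cast (ncard_add_inter_Icc_le hF₀ hZ₀ N).trans
    (Nat.mul_le_mul_right _ (ncard_inter_Icc_le_of_subset_Iic hF N))

def IsSqrtSparse (Q : Set ℕ) : Prop :=
  Tendsto (fun N : ℕ => ((Q ∩ Icc 1 N).ncard : ℝ) ^ 2 / N) atTop (𝓝 0)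

lemma IsSqrtSparse.mono {P Q : Set ℕ} (hQ : IsSqrtSparse Q) (h : P ⊆ Q) : IsSqrtSparse P :=
  squeeze_zero (fun _ => by positivity)
    (fun N => by
      gcongr
      exact (finite_Icc 1 N).inter_of_right _)
    hQ

lemma IsSqrtSparse.hasDensity_zero {Q : Set ℕ} (hQ : IsSqrtSparse Q) : HasDensity Q 0 :=
  squeeze_zero (partialDensity_nonneg Q)
    (fun N => by unfold partialDensity; gcongr; exact_mod_cast Nat.le_self_pow two_ne_zero _) hQ

lemma IsSqrtSparse.hasDensity_add_self {Q : Set ℕ} (hQ : IsSqrtSparse Q) (hQ₀ : ∀ q ∈ Q, 0 < q) :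
    HasDensity (Q + Q) 0 :=
  squeeze_zero (partialDensity_nonneg _)
    (fun N => by
      unfold partialDensity
      gcongr
      exact_mod_cast (ncard_add_inter_Icc_le hQ₀ hQ₀ N).trans_eq (sq _).symm) hQ

end Density

variable {θ : ℝ}

def fracBelow (θ x : ℝ) : Set ℕ := {n | 0 < n ∧ Int.fract (n * θ) < x}

lemma fracBelow_mono (θ : ℝ) : Monotone (fracBelow θ) :=
  fun _ _ hxy _ hn => ⟨hn.1, hn.2.trans_le hxy⟩

lemma fracBelow_min_one (θ x : ℝ) : fracBelow θ (min x 1) = fracBelow θ x := by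
  ext n
  simp [fracBelow, Int.fract_lt_one]

lemma fracBelow_add_subset (θ x y : ℝ) :
    fracBelow θ x + fracBelow θ y ⊆ fracBelow θ (x + y) := by
  rintro _ ⟨a, ⟨ha, hax⟩, b, ⟨-, hby⟩, rfl⟩
  refine ⟨Nat.add_pos_left ha b, ?_⟩
  push_cast
  rw [add_mul]
  exact (Int.fract_add_le _ _).trans_lt (add_lt_add hax hby)

lemma fract_natCast_sub_mul {q n : ℕ} (hqn : q ≤ n)
    (h : Int.fract (q * θ) ≤ Int.fract (n * θ)) :
    Int.fract (((n - q : ℕ) : ℝ) * θ) = Int.fract (n * θ) - Int.fract (q * θ) := by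
  rw [Nat.cast_sub hqn, sub_mul, Int.fract_sub_eq_sub_of_le h]

lemma abs_sum_range_sub_shift_le (h : ℕ → ℝ) (h₀ : ∀ n, 0 ≤ h n) (h₁ : ∀ n, h n < 1) (m N : ℕ) :
    |∑ k ∈ Finset.range N, (h (k + m) - h k)| ≤ m := by
  have htele : ∑ k ∈ Finset.range N, (h (k + m) - h k) =
      ∑ j ∈ Finset.range m, h (N + j) - ∑ j ∈ Finset.range m, h j := by
    have e₁ := Finset.sum_range_add h N m
    have e₂ := Finset.sum_range_add h m N
    rw [add_comm m N] at e₂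
    simp only [Finset.sum_sub_distrib, add_comm _ m]
    linarith
  have hbound (g : ℕ → ℝ) (hg₀ : ∀ j, 0 ≤ g j) (hg₁ : ∀ j, g j < 1) :
      0 ≤ ∑ j ∈ Finset.range m, g j ∧ ∑ j ∈ Finset.range m, g j ≤ m :=
    ⟨Finset.sum_nonneg fun j _ => hg₀ j,
      (Finset.sum_le_sum fun j _ => (hg₁ j).le).trans_eq (by simp)⟩
  obtain ⟨a₀, a₁⟩ := hbound (fun j => h (N + j)) (fun _ => h₀ _) (fun _ => h₁ _)
  obtain ⟨b₀, b₁⟩ := hbound h h₀ h₁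
  rw [htele, abs_sub_le_iff]
  constructor <;> linarith

/-- Since `[{nθ} < 1 - {mθ}] = 1 - {nθ} - {mθ} + {(n + m)θ}`, the counting function telescopes. -/
lemma abs_ncard_fracBelow_one_sub_le (θ : ℝ) (m N : ℕ) :
    |((fracBelow θ (1 - Int.fract (m * θ)) ∩ Icc 1 N).ncard : ℝ) - N * (1 - Int.fract (m * θ))|
      ≤ m := by
  set c := Int.fract (m * θ)
  set h : ℕ → ℝ := fun k => Int.fract (((k + 1 : ℕ) : ℝ) * θ)
  have hsum : ∀ f : ℕ → ℝ, ∑ n ∈ Finset.Icc 1 N, f n = ∑ k ∈ Finset.range N, f (k + 1) := by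
    intro f
    induction N with
    | zero => simp
    | succ N ih => rw [Finset.sum_Icc_succ_top (by omega), ih, Finset.sum_range_succ]
  have hset : fracBelow θ (1 - c) ∩ Icc 1 N =
      ↑((Finset.Icc 1 N).filter fun n : ℕ => Int.fract (n * θ) + c < 1) := by
    ext n
    simp only [fracBelow, mem_inter_iff, mem_ofPred_eq, mem_Icc, Finset.coe_filter,
      Finset.mem_Icc]
    constructor
    · rintro ⟨⟨-, hn⟩, hn'⟩; exact ⟨hn', by linarith⟩
    · rintro ⟨hn', hn⟩; exact ⟨⟨hn'.1, by linarith⟩, hn'⟩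
  have hcount : ((fracBelow θ (1 - c) ∩ Icc 1 N).ncard : ℝ) - N * (1 - c) =
      ∑ k ∈ Finset.range N, (h (k + m) - h k) := by
    rw [hset, Set.ncard_coe_finset, Finset.natCast_card_filter, hsum]
    have hterm : ∀ k : ℕ, (if Int.fract (((k + 1 : ℕ) : ℝ) * θ) + c < 1 then (1 : ℝ) else 0) =
        (1 - c) + (h (k + m) - h k) := by
      intro k
      rw [Int.ite_fract_add_lt_one]
      simp only [h, c]
      push_cast
      ring_nf
    simp only [hterm, Finset.sum_add_distrib, Finset.sum_const, Finset.card_range, nsmul_eq_mul]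
    ring
  rw [hcount]
  exact abs_sum_range_sub_shift_le h (fun _ => Int.fract_nonneg _) (fun _ => Int.fract_lt_one _) m N

lemma hasDensity_fracBelow_one_sub_fract (θ : ℝ) (m : ℕ) :
    HasDensity (fracBelow θ (1 - Int.fract (m * θ))) (1 - Int.fract (m * θ)) := by
  set t := 1 - Int.fract (m * θ)
  rw [HasDensity, tendsto_iff_norm_sub_tendsto_zero]
  refine squeeze_zero' (Eventually.of_forall fun _ => norm_nonneg _) ?_
    (tendsto_const_div_atTop_nhds_zero_nat (m : ℝ))
  filter_upwards [eventually_gt_atTop 0] with N hN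
  have hN' : (0 : ℝ) < N := by exact_mod_cast hN
  rw [Real.norm_eq_abs, partialDensity, div_sub' hN'.ne', abs_div, abs_of_pos hN']
  gcongr
  exact abs_ncard_fracBelow_one_sub_le θ m N

lemma floor_div_add_one_mul_mem_Ioc {w d : ℝ} (hw : 0 ≤ w) (hd : 0 < d) :
    ((⌊w / d⌋₊ + 1 : ℕ) : ℝ) * d ∈ Ioc w (w + d) := by
  have h₁ := (div_lt_iff₀ hd).1 (Nat.lt_floor_add_one (w / d))
  have h₂ := (le_div_iff₀ hd).1 (Nat.floor_le (div_nonneg hw hd.le))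
  push_cast
  constructor <;> linarith

lemma exists_fract_add_mul_mem_Ioo {e δ : ℝ} (he : e ≠ 0) (heδ : |e| < δ) (x : ℝ) {u : ℝ}
    (hu : 0 ≤ u) (huδ : u + δ ≤ 1) :
    ∃ j : ℕ, 0 < j ∧ j ≤ ⌊2 / |e|⌋₊ + 1 ∧ Int.fract (x + j * e) ∈ Ioo u (u + δ) := by
  have hx₀ := Int.fract_nonneg x
  have hx₁ := Int.fract_lt_one x
  have hx := Int.floor_add_fract x
  have he' : 0 < |e| := abs_pos.2 he
  have hδ : 0 < δ := he'.trans heδ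
  rcases he.lt_or_gt with hneg | hpos
  · -- aim just below the integer `⌊x⌋ - 1 + (u + δ)`
    rw [abs_of_neg hneg] at he' heδ
    set w := Int.fract x + 1 - u - δ
    obtain ⟨hj₁, hj₂⟩ := floor_div_add_one_mul_mem_Ioc (show 0 ≤ w by linarith) he'
    set j : ℕ := ⌊w / -e⌋₊ + 1
    have key : Int.fract (x + j * e) = x + j * e - (⌊x⌋ - 1 : ℤ) :=
      Int.fract_eq_iff.2 ⟨by push_cast; nlinarith, by push_cast; nlinarith, _, by ring⟩
    refine ⟨j, Nat.succ_pos _, ?_, ?_⟩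
    · rw [abs_of_neg hneg]
      exact Nat.add_le_add_right (Nat.floor_le_floor (div_le_div_of_nonneg_right (by linarith)
        he'.le)) 1
    · rw [key]; push_cast; constructor <;> nlinarith
  · -- aim just above the integer `⌊x⌋ + 1 + u`
    rw [abs_of_pos hpos] at he' heδ
    set w := u + 1 - Int.fract x
    obtain ⟨hj₁, hj₂⟩ := floor_div_add_one_mul_mem_Ioc (show 0 ≤ w by linarith) he'
    set j : ℕ := ⌊w / e⌋₊ + 1
    have key : Int.fract (x + j * e) = x + j * e - (⌊x⌋ + 1 : ℤ) :=
      Int.fract_eq_iff.2 ⟨by push_cast; nlinarith, by push_cast; nlinarith, _, by ring⟩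
    refine ⟨j, Nat.succ_pos _, ?_, ?_⟩
    · rw [abs_of_pos hpos]
      exact Nat.add_le_add_right (Nat.floor_le_floor (div_le_div_of_nonneg_right (by linarith)
        he'.le)) 1
    · rw [key]; push_cast; constructor <;> nlinarith

theorem exists_uniform_fract_net (hθ : Irrational θ) {δ : ℝ} (hδ : 0 < δ) :
    ∃ L : ℕ, ∀ (s : ℕ) (u : ℝ), 0 ≤ u → u + δ ≤ 1 →
      ∃ n, s < n ∧ n ≤ s + L ∧ Int.fract (n * θ) ∈ Ioo u (u + δ) := by
  obtain ⟨N, hN⟩ := exists_nat_one_div_lt hδ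
  obtain ⟨k, hk₀, -, hk⟩ := Real.exists_nat_abs_mul_sub_round_le θ N.succ_pos
  set e := k * θ - round (k * θ)
  have he : e ≠ 0 := sub_ne_zero.2 ((hθ.natCast_mul hk₀.ne').ne_int _)
  have heδ : |e| < δ := by
    refine hk.trans_lt (lt_of_le_of_lt ?_ hN)
    gcongr
    linarith
  refine ⟨(⌊2 / |e|⌋₊ + 1) * k, fun s u hu huδ => ?_⟩
  obtain ⟨j, hj₀, hjle, hfr⟩ := exists_fract_add_mul_mem_Ioo he heδ (s * θ) hu huδ
  refine ⟨s + j * k, by have := Nat.mul_pos hj₀ hk₀; omega,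
    by have := Nat.mul_le_mul_right k hjle; omega, ?_⟩
  have : ((s + j * k : ℕ) : ℝ) * θ = s * θ + j * e + ((j * round (k * θ) : ℤ) : ℝ) := by
    simp only [e]; push_cast; ring
  rwa [this, Int.fract_add_intCast]

theorem hasDensity_fracBelow (hθ : Irrational θ) {x : ℝ} (hx : 0 ≤ x) :
    HasDensity (fracBelow θ x) (min x 1) := by
  rw [← fracBelow_min_one]
  set y := min x 1
  have hy₀ : 0 ≤ y := le_min hx zero_le_one
  have hy₁ : y ≤ 1 := min_le_right x 1
  refine tendsto_order.2 ⟨fun a ha => ?_, fun b hb => ?_⟩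
  · rcases lt_or_ge a 0 with ha₀ | ha₀
    · exact Eventually.of_forall fun N => ha₀.trans_le (partialDensity_nonneg _ N)
    obtain ⟨L, hL⟩ := exists_uniform_fract_net hθ (sub_pos.2 ha)
    obtain ⟨m, -, -, hm₁, hm₂⟩ := hL 0 (1 - y) (by linarith) (by linarith)
    filter_upwards [(hasDensity_fracBelow_one_sub_fract θ m).eventually_const_lt
      (show a < 1 - Int.fract (m * θ) by linarith)] with N hN
    exact hN.trans_le (partialDensity_mono (fracBelow_mono θ (by linarith)) N)
  · rcases lt_or_ge 1 b with hb₁ | hb₁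
    · exact Eventually.of_forall fun N => (partialDensity_le_one _ N).trans_lt hb₁
    obtain ⟨L, hL⟩ := exists_uniform_fract_net hθ (sub_pos.2 hb)
    obtain ⟨m, -, -, hm₁, hm₂⟩ := hL 0 (1 - b) (by linarith) (by linarith)
    filter_upwards [(hasDensity_fracBelow_one_sub_fract θ m).eventually_lt_const
      (show 1 - Int.fract (m * θ) < b by linarith)] with N hN
    exact (partialDensity_mono (fracBelow_mono θ (by linarith)) N).trans_lt hN

theorem eventually_lt_partialDensity_of_cover (hθ : Irrational θ) {S : Set ℕ} {y : ℝ}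
    (hy : y ≤ 1)
    (hS : ∀ κ > 0, ∀ᶠ n : ℕ in atTop, Int.fract (n * θ) ∈ Ioo κ (y - κ) → n ∈ S) :
    ∀ a < y, ∀ᶠ N in atTop, a < partialDensity S N := by
  intro a ha
  rcases lt_or_ge a 0 with ha₀ | ha₀
  · exact Eventually.of_forall fun N => ha₀.trans_le (partialDensity_nonneg S N)
  set κ := (y - a) / 4
  have hκ : 4 * κ = y - a := by ring
  obtain ⟨K, hK⟩ := eventually_atTop.1 (hS κ (by linarith))
  have hsub : fracBelow θ (y - κ) ⊆ S ∪ (fracBelow θ (2 * κ) ∪ Iic K) := by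
    rintro n ⟨hn₀, hn⟩
    by_cases hnK : n ≤ K
    · exact Or.inr (Or.inr hnK)
    by_cases hnκ : Int.fract (n * θ) ≤ κ
    · exact Or.inr (Or.inl ⟨hn₀, by linarith⟩)
    exact Or.inl (hK n (by omega) ⟨not_le.1 hnκ, hn⟩)
  have hlim := (hasDensity_fracBelow hθ (x := y - κ) (by linarith)).sub
    ((hasDensity_fracBelow hθ (x := 2 * κ) (by positivity)).add (hasDensity_Iic K))
  rw [min_eq_left (by linarith : y - κ ≤ 1)] at hlim
  filter_upwards [hlim.eventually_const_lt
    (show a < y - κ - (min (2 * κ) 1 + 0) by linarith [min_le_left (2 * κ) 1])] with N hN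
  linarith [partialDensity_mono hsub N, partialDensity_union_le S (fracBelow θ (2 * κ) ∪ Iic K) N,
    partialDensity_union_le (fracBelow θ (2 * κ)) (Iic K) N]

theorem eventually_partialDensity_lt_of_subset (hθ : Irrational θ) {S : Set ℕ} {y : ℝ}
    (hy : 0 ≤ y) (hS : ∀ ε > 0, ∃ Z, HasDensity Z 0 ∧ S ⊆ fracBelow θ (y + ε) ∪ Z) :
    ∀ b > y, ∀ᶠ N in atTop, partialDensity S N < b := by
  intro b hb
  obtain ⟨Z, hZ, hSZ⟩ := hS ((b - y) / 2) (by linarith)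
  have hlim := (hasDensity_fracBelow hθ (x := y + (b - y) / 2) (by linarith)).add hZ
  filter_upwards [hlim.eventually_lt_const
    (show min (y + (b - y) / 2) 1 + 0 < b by linarith [min_le_left (y + (b - y) / 2) 1])] with N hN
  linarith [partialDensity_mono hSZ N, partialDensity_union_le (fracBelow θ (y + (b - y) / 2)) Z N]

theorem hasDensity_of_cover_of_subset (hθ : Irrational θ) {S : Set ℕ} {y : ℝ} (hy₀ : 0 ≤ y)
    (hy₁ : y ≤ 1) (hcover : ∀ κ > 0, ∀ᶠ n : ℕ in atTop, Int.fract (n * θ) ∈ Ioo κ (y - κ) → n ∈ S)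
    (hsub : ∀ ε > 0, ∃ Z, HasDensity Z 0 ∧ S ⊆ fracBelow θ (y + ε) ∪ Z) :
    HasDensity S y :=
  tendsto_order.2 ⟨eventually_lt_partialDensity_of_cover hθ hy₁ hcover,
    eventually_partialDensity_lt_of_subset hθ hy₀ hsub⟩

def IsFracNet (θ : ℝ) (R : Set ℕ) (γ δ : ℝ) (n : ℕ) : Prop :=
  ∀ u, 0 ≤ u → u + δ ≤ γ → ∃ q ∈ R, q < n ∧ Int.fract (q * θ) ∈ Ioo u (u + δ)

lemma IsFracNet.union {R₁ R₂ : Set ℕ} {γ₁ γ₂ δ : ℝ} {n : ℕ} (h₁ : IsFracNet θ R₁ γ₁ δ n)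
    (h₂ : IsFracNet θ R₂ γ₂ δ n) : IsFracNet θ (R₁ ∪ R₂) (max γ₁ γ₂) δ n := by
  intro u hu huγ
  rcases le_max_iff.1 huγ with h | h
  · obtain ⟨q, hq, hqn, hfr⟩ := h₁ u hu h
    exact ⟨q, Or.inl hq, hqn, hfr⟩
  · obtain ⟨q, hq, hqn, hfr⟩ := h₂ u hu h
    exact ⟨q, Or.inr hq, hqn, hfr⟩

lemma eventually_isFracNet_fracBelow (hθ : Irrational θ) {γ δ : ℝ} (hγ : γ ≤ 1) (hδ : 0 < δ) :
    ∀ᶠ n in atTop, IsFracNet θ (fracBelow θ γ) γ δ n := by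
  obtain ⟨L, hL⟩ := exists_uniform_fract_net hθ hδ
  filter_upwards [eventually_gt_atTop L] with n hn u hu huγ
  obtain ⟨q, hq₀, hqL, hfr⟩ := hL 0 u hu (huγ.trans hγ)
  exact ⟨q, ⟨hq₀, hfr.2.trans_le huγ⟩, by omega, hfr⟩

lemma mem_fracBelow_add_of_isFracNet {R : Set ℕ} {x γ δ : ℝ} {n : ℕ}
    (hR : IsFracNet θ R γ δ n) (hδx : δ ≤ x) (hδγ : δ ≤ γ) (hn₁ : δ ≤ Int.fract (n * θ))
    (hn₂ : Int.fract (n * θ) + δ ≤ x + γ) : n ∈ fracBelow θ x + R := by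
  set u := max (Int.fract (n * θ) - x) 0
  have hu : u + δ ≤ γ ∧ u + δ ≤ Int.fract (n * θ) := by
    constructor <;> rw [← le_sub_iff_add_le] <;> exact max_le (by linarith) (by linarith)
  obtain ⟨q, hqR, hqn, hq₁, hq₂⟩ := hR u (le_max_right _ _) hu.1
  have hfr := fract_natCast_sub_mul (θ := θ) hqn.le (by linarith)
  refine ⟨n - q, ⟨by omega, ?_⟩, q, hqR, Nat.sub_add_cancel hqn.le⟩
  rw [hfr]
  linarith [le_max_left (Int.fract (n * θ) - x) 0]

theorem exists_antitone_tendsto_zero_eventually {p : ℝ → ℕ → Prop}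
    (hp : ∀ δ > 0, ∀ᶠ n in atTop, p δ n) :
    ∃ ε : ℕ → ℝ, Antitone ε ∧ Tendsto ε atTop (𝓝 0) ∧ ∀ᶠ n in atTop, p (ε n) n := by
  choose M hM using fun k : ℕ => eventually_atTop.1 (hp (1 / ((k : ℝ) + 1)) (by positivity))
  set k : ℕ → ℕ := fun n => Nat.findGreatest (fun j => M j ≤ n) n
  have hk_mono : Monotone k := fun n n' h => Nat.findGreatest_mono (fun _ hj => hj.trans h) h
  have hk_tendsto : Tendsto k atTop atTop :=
    tendsto_atTop.2 fun j => eventually_atTop.2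
      ⟨max j (M j), fun n hn => Nat.le_findGreatest (le_of_max_le_left hn) (le_of_max_le_right hn)⟩
  refine ⟨fun n => 1 / ((k n : ℝ) + 1), fun n n' h => ?_,
    tendsto_one_div_add_atTop_nhds_zero_nat.comp hk_tendsto,
    eventually_atTop.2 ⟨M 0, fun n hn =>
      hM _ n (Nat.findGreatest_spec (P := fun j => M j ≤ n) (Nat.zero_le n) hn)⟩⟩
  dsimp only
  gcongr
  exact hk_mono h

/-- The first `m + 1` blocks have at most `√(blockStart L m / (m + 1))` elements in total. -/
def blockStart (L : ℕ → ℕ) (m : ℕ) : ℕ := (∑ j ∈ Finset.range (m + 1), (L j + 1)) ^ 2 * (m + 1)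

def blocks (L : ℕ → ℕ) : Set ℕ := ⋃ m, Ioc (blockStart L m) (blockStart L m + L m)

lemma lt_blockStart (L : ℕ → ℕ) (m : ℕ) : m < blockStart L m := by
  have h : 1 ≤ ∑ j ∈ Finset.range (m + 1), (L j + 1) :=
    (Nat.le_add_left 1 (L 0)).trans
      (Finset.single_le_sum (f := fun j => L j + 1) (fun _ _ => Nat.zero_le _) (by simp))
  calc m < 1 * (m + 1) := by omega
    _ ≤ _ := Nat.mul_le_mul_right _ (Nat.one_le_pow _ _ h)

lemma ncard_blocks_inter_Icc_sq_mul_le (L : ℕ → ℕ) {j N : ℕ} (hN : blockStart L j < N) :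
    (blocks L ∩ Icc 1 N).ncard ^ 2 * (j + 1) ≤ N := by
  set k := Nat.findGreatest (fun m => blockStart L m < N) N
  have hjN : j ≤ N := ((lt_blockStart L j).trans hN).le
  have hcount : (blocks L ∩ Icc 1 N).ncard ≤ ∑ m ∈ Finset.range (k + 1), (L m + 1) := by
    have hsub : blocks L ∩ Icc 1 N ⊆ ↑((Finset.range (k + 1)).biUnion
        fun m => Finset.Ioc (blockStart L m) (blockStart L m + L m)) := by
      rintro n ⟨hn, -, hnN⟩
      obtain ⟨m, hm₁, hm₂⟩ := mem_iUnion.1 hn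
      have hmk : m ≤ k :=
        Nat.le_findGreatest (((lt_blockStart L m).trans hm₁).le.trans hnN) (hm₁.trans_le hnN)
      simp only [Finset.coe_biUnion, Finset.coe_range, Finset.coe_Ioc, mem_iUnion, mem_Iio]
      exact ⟨m, by omega, hm₁, hm₂⟩
    calc _ ≤ _ := Set.ncard_le_ncard hsub (Finset.finite_toSet _)
      _ = _ := Set.ncard_coe_finset _
      _ ≤ ∑ m ∈ Finset.range (k + 1), (Finset.Ioc _ _).card := Finset.card_biUnion_le
      _ ≤ _ := Finset.sum_le_sum fun m _ => by simp
  calc (blocks L ∩ Icc 1 N).ncard ^ 2 * (j + 1)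
      ≤ (∑ m ∈ Finset.range (k + 1), (L m + 1)) ^ 2 * (k + 1) :=
        Nat.mul_le_mul (Nat.pow_le_pow_left hcount 2) (by simpa using Nat.le_findGreatest hjN hN)
    _ = blockStart L k := rfl
    _ ≤ N := (Nat.findGreatest_spec (P := fun m => blockStart L m < N) hjN hN).le

lemma isSqrtSparse_blocks (L : ℕ → ℕ) : IsSqrtSparse (blocks L) := by
  refine tendsto_order.2 ⟨fun a ha => Eventually.of_forall fun N => ha.trans_le (by positivity),
    fun b hb => ?_⟩
  obtain ⟨j, hj⟩ := exists_nat_one_div_lt hb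
  filter_upwards [eventually_gt_atTop (blockStart L j)] with N hN
  have hN' : (0 : ℝ) < N := by exact_mod_cast (Nat.zero_le _).trans_lt hN
  refine lt_of_le_of_lt ?_ hj
  rw [div_le_div_iff₀ hN' (by positivity), one_mul]
  exact_mod_cast ncard_blocks_inter_Icc_sq_mul_le L hN

theorem exists_isSqrtSparse_isFracNet (hθ : Irrational θ) {γ : ℝ} (hγ : γ ≤ 1) :
    ∃ Q : Set ℕ, Q ⊆ fracBelow θ γ ∧ IsSqrtSparse Q ∧
      ∀ δ > 0, ∀ᶠ n in atTop, IsFracNet θ Q γ δ n := by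
  choose L hL using fun m : ℕ =>
    exists_uniform_fract_net hθ (δ := 1 / ((m : ℝ) + 1)) (by positivity)
  refine ⟨blocks L ∩ fracBelow θ γ, inter_subset_right, (isSqrtSparse_blocks L).mono
    inter_subset_left, fun δ hδ => ?_⟩
  obtain ⟨m, hm⟩ := exists_nat_one_div_lt hδ
  filter_upwards [eventually_gt_atTop (blockStart L m + L m)] with n hn u hu huγ
  obtain ⟨q, hq₁, hq₂, hfr₁, hfr₂⟩ := hL m (blockStart L m) u hu (by linarith)
  have hq₀ : 0 < q := (Nat.zero_le _).trans_lt hq₁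
  exact ⟨q, ⟨mem_iUnion.2 ⟨m, hq₁, hq₂⟩, hq₀, by linarith⟩, by omega, hfr₁, by linarith⟩

lemma union_add_self_subset {α β : ℝ} {Q : Set ℕ} (hαβ : min (2 * α) 1 ≤ β)
    (hQ : Q ⊆ fracBelow θ (β - α)) :
    (fracBelow θ α ∪ Q) + (fracBelow θ α ∪ Q) ⊆ fracBelow θ β ∪ (Q + Q) := by
  rintro _ ⟨a, ha, b, hb, rfl⟩
  rcases ha with ha | ha <;> rcases hb with hb | hb
  · refine Or.inl (fracBelow_mono θ hαβ ?_)
    rw [fracBelow_min_one, two_mul]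
    exact fracBelow_add_subset θ α α ⟨a, ha, b, hb, rfl⟩
  · exact Or.inl (fracBelow_mono θ (by linarith)
      (fracBelow_add_subset θ α (β - α) ⟨a, ha, b, hQ hb, rfl⟩))
  · exact Or.inl (fracBelow_mono θ (by linarith)
      (fracBelow_add_subset θ (β - α) α ⟨a, hQ ha, b, hb, rfl⟩))
  · exact Or.inr ⟨a, ha, b, hb, rfl⟩

lemma add_self_subset_of_forall_gt {A Q : Set ℕ} {K : ℕ} {β η : ℝ} (hβ : 0 ≤ β) (hη : 0 ≤ η)
    (hQ : Q ⊆ fracBelow θ β) (hA : ∀ n ∈ A, K < n → n ∈ fracBelow θ η ∪ Q) :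
    A + A ⊆ fracBelow θ (β + 2 * η) ∪ (((A ∩ Iic K) + A) ∪ (A + (A ∩ Iic K)) ∪ (Q + Q)) := by
  rintro _ ⟨a, ha, b, hb, rfl⟩
  by_cases haK : a ≤ K
  · exact Or.inr (Or.inl (Or.inl ⟨a, ⟨ha, haK⟩, b, hb, rfl⟩))
  by_cases hbK : b ≤ K
  · exact Or.inr (Or.inl (Or.inr ⟨a, ha, b, ⟨hb, hbK⟩, rfl⟩))
  rcases hA a ha (by omega) with ha' | ha' <;> rcases hA b hb (by omega) with hb' | hb'
  · exact Or.inl (fracBelow_mono θ (by linarith)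
      (fracBelow_add_subset θ η η ⟨a, ha', b, hb', rfl⟩))
  · exact Or.inl (fracBelow_mono θ (by linarith)
      (fracBelow_add_subset θ η β ⟨a, ha', b, hQ hb', rfl⟩))
  · exact Or.inl (fracBelow_mono θ (by linarith)
      (fracBelow_add_subset θ β η ⟨a, hQ ha', b, hb', rfl⟩))
  · exact Or.inr (Or.inr ⟨a, ha', b, hb', rfl⟩)

theorem exists_hasDensity_add_self_of_pos (hθ : Irrational θ) {α β : ℝ} (hα₀ : 0 < α)
    (hα₁ : α ≤ 1) (hαβ : min (2 * α) 1 ≤ β) (hβ₁ : β ≤ 1) :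
    ∃ A : Set ℕ, (∀ n ∈ A, 0 < n) ∧ HasDensity A α ∧ HasDensity (A + A) β := by
  obtain ⟨Q, hQβ, hQ, hQnet⟩ := exists_isSqrtSparse_isFracNet hθ (γ := β - α) (by linarith)
  have hQ₀ : ∀ q ∈ Q, 0 < q := fun q hq => (hQβ hq).1
  have hβ₀ : 0 ≤ β := le_trans (le_min (by linarith) zero_le_one) hαβ
  refine ⟨fracBelow θ α ∪ Q, fun n hn => hn.elim (·.1) (hQ₀ n), ?_, ?_⟩
  · refine hasDensity_of_cover_of_subset hθ hα₀.le hα₁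
      (fun κ hκ => ?_) (fun ε hε => ⟨Q, hQ.hasDensity_zero, ?_⟩)
    · filter_upwards [eventually_gt_atTop 0] with n hn₀ hn
      exact Or.inl ⟨hn₀, by linarith [hn.2]⟩
    · exact union_subset_union_left Q (fracBelow_mono θ (by linarith))
  · refine hasDensity_of_cover_of_subset hθ hβ₀ hβ₁ (fun κ hκ => ?_)
      fun ε hε => ⟨Q + Q, hQ.hasDensity_add_self hQ₀, ?_⟩
    · have hδ : 0 < min κ α := lt_min hκ hα₀
      filter_upwards [(eventually_isFracNet_fracBelow hθ hα₁ hδ).and (hQnet _ hδ)]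
        with n ⟨h₁, h₂⟩ hfr
      refine add_subset_add_right subset_union_left (mem_fracBelow_add_of_isFracNet (h₁.union h₂)
        (min_le_right _ _) ((min_le_right _ _).trans (le_max_left _ _)) ?_ ?_)
      · linarith [min_le_left κ α, hfr.1]
      · linarith [min_le_left κ α, hfr.2, le_max_right α (β - α)]
    · exact (union_add_self_subset hαβ hQβ).trans
        (union_subset_union_left _ (fracBelow_mono θ (by linarith)))

theorem exists_hasDensity_zero_add_self (hθ : Irrational θ) {β : ℝ} (hβ₀ : 0 ≤ β) (hβ₁ : β ≤ 1) :
    ∃ A : Set ℕ, (∀ n ∈ A, 0 < n) ∧ HasDensity A 0 ∧ HasDensity (A + A) β := by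
  obtain ⟨Q, hQβ, hQ, hQnet⟩ := exists_isSqrtSparse_isFracNet hθ hβ₁
  obtain ⟨ε, hε_anti, hε_lim, hε_net⟩ := exists_antitone_tendsto_zero_eventually hQnet
  set A := {p : ℕ | 0 < p ∧ Int.fract (p * θ) < ε p} ∪ Q
  have hA₀ : ∀ n ∈ A, 0 < n := fun n hn => hn.elim (·.1) fun hn => (hQβ hn).1
  have hA_tail : ∀ η > 0, ∃ K, ∀ n ∈ A, K < n → n ∈ fracBelow θ η ∪ Q := by
    intro η hη
    obtain ⟨K, hK⟩ := eventually_atTop.1 (hε_lim.eventually_lt_const hη)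
    refine ⟨K, fun n hn hnK => hn.imp (fun hn => ⟨hn.1, hn.2.trans (hK n hnK.le)⟩) id⟩
  have hA : HasDensity A 0 := by
    refine hasDensity_of_cover_of_subset hθ le_rfl zero_le_one
      (fun κ hκ => Eventually.of_forall fun n hn => absurd hn.1 (by linarith [hn.2])) fun η hη => ?_
    obtain ⟨K, hK⟩ := hA_tail η hη
    refine ⟨Iic K ∪ Q, (hasDensity_Iic K).union_zero hQ.hasDensity_zero, fun n hn => ?_⟩
    by_cases hnK : n ≤ K
    · exact Or.inr (Or.inl hnK)
    · rcases hK n hn (by omega) with h | h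
      · exact Or.inl (by rwa [zero_add])
      · exact Or.inr (Or.inr h)
  refine ⟨A, hA₀, hA, hasDensity_of_cover_of_subset hθ hβ₀ hβ₁ (fun κ hκ => ?_) fun η hη => ?_⟩
  · filter_upwards [hε_net, hε_lim.eventually_lt_const hκ] with n hnet hεκ hfr
    obtain ⟨p, hp, q, hq, rfl⟩ := mem_fracBelow_add_of_isFracNet hnet le_rfl
      (by linarith [hfr.1, hfr.2]) (by linarith [hfr.1]) (by linarith [hfr.2])
    exact ⟨p, Or.inl ⟨hp.1, hp.2.trans_le (hε_anti (Nat.le_add_right p q))⟩, q, Or.inr hq, rfl⟩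
  · obtain ⟨K, hK⟩ := hA_tail (η / 2) (by linarith)
    set F := A ∩ Iic K
    have hF₀ : ∀ f ∈ F, 0 < f := fun f hf => hA₀ f hf.1
    refine ⟨(F + A) ∪ (A + F) ∪ (Q + Q),
      ((hA.add_zero_of_subset_Iic inter_subset_right hF₀ hA₀).union_zero
        (add_comm F A ▸ hA.add_zero_of_subset_Iic inter_subset_right hF₀ hA₀)).union_zero
        (hQ.hasDensity_add_self fun q hq => (hQβ hq).1), ?_⟩
    exact (add_self_subset_of_forall_gt hβ₀ (by linarith) hQβ hK).trans
      (union_subset_union_left _ (fracBelow_mono θ (by linarith)))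

/-- For any `(α, β) ∈ [0,1]²` with `β ≥ min(2α, 1)`, there is a set `A` of positive
integers whose asymptotic density is `α` and such that `A + A` has asymptotic density `β`. -/
theorem stmt_0 (α β : ℝ) (hα : α ∈ Set.Icc (0:ℝ) 1) (hβ : β ∈ Set.Icc (0:ℝ) 1)
    (h : min (2 * α) 1 ≤ β) :
    ∃ A : Set ℕ, (∀ n ∈ A, 0 < n) ∧
      Tendsto (fun n : ℕ => ((A ∩ Set.Icc 1 n).ncard : ℝ) / n) atTop (𝓝 α) ∧
      Tendsto (fun n : ℕ => (((A + A) ∩ Set.Icc 1 n).ncard : ℝ) / n) atTop (𝓝 β) := by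
  rcases hα.1.eq_or_lt with rfl | hα₀
  · exact exists_hasDensity_zero_add_self irrational_sqrt_two hβ.1 hβ.2
  · exact exists_hasDensity_add_self_of_pos irrational_sqrt_two hα₀ hα.2 h hβ.2
end

section
/- Let (α,β) ∈ [0,1]² with β ≥ min(2α,1). Then there exists a measurable subset A ⊆ 𝕋 = ℝ/ℤ such that A + A is measurable, μ(A) = α and μ(A+A) = β, where μ is the Haar probability measure on 𝕋. -/
/-!
The Cantor set `K ⊆ [0, 1]` is Lebesgue-null, yet `K + K = [0, 2]`: write `x / 2` in base 3 and
split each doubled digit `2d ∈ {0, 2, 4}` as a sum of two digits from `{0, 2}`. Hence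
`S = (β / 2) • K ∪ [0, α]` has measure `α` and `S + S = [0, max β (2α)]`. Projecting to the
circle commutes with sums and preserves the measure of subsets of `[0, 1]`, while an interval
`[0, m]` projects to a set of measure `min m 1`; the hypothesis `min (2α) 1 ≤ β ≤ 1` is exactly
what makes `min (max β (2α)) 1 = β`.
-/

open MeasureTheory Pointwise Set

namespace Real

theorem ofDigits_add_ofDigits {b : ℕ} {d e f : ℕ → Fin b} {c : ℝ}
    (h : ∀ i, (d i : ℝ) + e i = c * f i) :
    ofDigits d + ofDigits e = c * ofDigits f := by
  rw [ofDigits, ofDigits, ofDigits, ← summable_ofDigitsTerm.tsum_add summable_ofDigitsTerm,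
    ← tsum_mul_left]
  congr 1 with i
  simp only [ofDigitsTerm]
  linear_combination ((b : ℝ) ^ (i + 1))⁻¹ * h i

end Real

open Real

theorem cantorSet_add_cantorSet : cantorSet + cantorSet = Icc 0 2 := by
  refine subset_antisymm ?_ fun x hx => ?_
  · calc cantorSet + cantorSet ⊆ Icc (0 : ℝ) 1 + Icc 0 1 :=
          add_subset_add cantorSet_subset_unitInterval cantorSet_subset_unitInterval
      _ = Icc 0 2 := by norm_num [Icc_add_Icc]
  obtain ⟨f, -, hf⟩ := ofDigits_SurjOn (b := 3) (by norm_num)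
    (show x / 2 ∈ Icc 0 1 from ⟨by linarith [hx.1], by linarith [hx.2]⟩)
  set d : ℕ → Fin 3 := fun i => if f i = 0 then 0 else 2
  set e : ℕ → Fin 3 := fun i => if f i = 2 then 2 else 0
  have hde : ∀ i, (d i : ℝ) + e i = 2 * f i := fun i => by
    simp only [d, e]; generalize f i = k; fin_cases k <;> norm_num [Fin.ext_iff]
  rw [cantorSet_eq_zero_two_ofDigits]
  refine ⟨ofDigits d, ⟨d, fun i => ?_, rfl⟩, ofDigits e, ⟨e, fun i => ?_, rfl⟩, ?_⟩
  · simp only [d]; split_ifs <;> decide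
  · simp only [e]; split_ifs <;> decide
  · show ofDigits d + ofDigits e = x
    rw [ofDigits_add_ofDigits hde, hf]; ring

theorem volume_preCantorSet_le (n : ℕ) :
    volume (preCantorSet n) ≤ ENNReal.ofReal ((2 / 3) ^ n) := by
  induction n with
  | zero => simp
  | succ n ih =>
    have h₀ : (fun x : ℝ => x / 3) = AffineMap.homothety (0 : ℝ) (1 / 3 : ℝ) := by
      funext x; simp [AffineMap.homothety_apply]; ring
    have h₁ : (fun x : ℝ => (2 + x) / 3) = AffineMap.homothety (1 : ℝ) (1 / 3 : ℝ) := by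
      funext x; simp [AffineMap.homothety_apply]; ring
    calc volume (preCantorSet (n + 1))
        ≤ volume ((· / 3) '' preCantorSet n) + volume ((fun x => (2 + x) / 3) '' preCantorSet n) :=
          measure_union_le _ _
      _ = 2 * ENNReal.ofReal (1 / 3) * volume (preCantorSet n) := by
          rw [h₀, h₁, Measure.addHaar_image_homothety, Measure.addHaar_image_homothety]
          norm_num; ring
      _ ≤ 2 * ENNReal.ofReal (1 / 3) * ENNReal.ofReal ((2 / 3) ^ n) := by gcongr
      _ = ENNReal.ofReal ((2 / 3) ^ (n + 1)) := by
          rw [← ENNReal.ofReal_ofNat 2, ← ENNReal.ofReal_mul (by norm_num),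
            ← ENNReal.ofReal_mul (by norm_num)]
          ring_nf

theorem volume_cantorSet : volume cantorSet = 0 := by
  have h := ENNReal.tendsto_ofReal
    (tendsto_pow_atTop_nhds_zero_of_lt_one (by norm_num : (0 : ℝ) ≤ 2 / 3) (by norm_num))
  rw [ENNReal.ofReal_zero] at h
  exact le_antisymm (ge_of_tendsto' h fun n => (measure_mono (iInter_subset _ n)).trans
    (volume_preCantorSet_le n)) zero_le

theorem QuotientAddGroup.measurableSet_image_mk {G : Type*} [AddGroup G] [MeasurableSpace G]
    [MeasurableAdd G] (N : AddSubgroup G) [Countable N] {s : Set G} (hs : MeasurableSet s) :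
    MeasurableSet ((↑) '' s : Set (G ⧸ N)) := by
  change MeasurableSet (QuotientAddGroup.mk ⁻¹' (QuotientAddGroup.mk '' s))
  rw [QuotientAddGroup.preimage_image_mk]
  exact .iUnion fun x => measurable_add_const _ hs

namespace AddCircle

variable {T : ℝ} [Fact (0 < T)]

theorem volume_singleton (x : AddCircle T) : volume ({x} : Set (AddCircle T)) = 0 := by
  simpa using volume_closedBall T (x := x) 0

theorem volume_image_coe_of_subset_Ioc {s : Set ℝ} {t : ℝ} (hs : MeasurableSet s)
    (h : s ⊆ Ioc t (t + T)) : volume ((↑) '' s : Set (AddCircle T)) = volume s := by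
  rw [add_projection_respects_measure T t (QuotientAddGroup.measurableSet_image_mk _ hs)]
  congr 1
  ext x
  refine ⟨fun ⟨⟨y, hy, hyx⟩, hx⟩ => ?_, fun hx => ⟨⟨x, hx, rfl⟩, h hx⟩⟩
  have := congrArg (equivIoc T t) hyx
  rw [equivIoc_coe_eq (h hy), equivIoc_coe_eq hx, Subtype.mk.injEq] at this
  exact this ▸ hy

theorem volume_image_coe_of_subset_Icc {s : Set ℝ} {t : ℝ} (hs : MeasurableSet s)
    (h : s ⊆ Icc t (t + T)) : volume ((↑) '' s : Set (AddCircle T)) = volume s := by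
  have hIoc : s \ {t} ⊆ Ioc t (t + T) := fun x ⟨hx, hxt⟩ =>
    ⟨lt_of_le_of_ne (h hx).1 (Ne.symm hxt), (h hx).2⟩
  have hdiff : volume ((↑) '' (s \ {t}) : Set (AddCircle T)) = volume s := by
    rw [volume_image_coe_of_subset_Ioc (hs.diff (measurableSet_singleton t)) hIoc,
      measure_sdiff_null Real.volume_singleton]
  refine le_antisymm ?_ (hdiff ▸ measure_mono (image_mono sdiff_subset))
  calc volume ((↑) '' s : Set (AddCircle T))
      ≤ volume ((↑) '' (s \ {t}) ∪ {(t : AddCircle T)}) := by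
        rw [← image_singleton, ← image_union, sdiff_union_self]
        exact measure_mono (image_mono subset_union_left)
    _ ≤ volume ((↑) '' (s \ {t}) : Set (AddCircle T)) + volume {(t : AddCircle T)} :=
        measure_union_le _ _
    _ = volume s := by rw [hdiff, volume_singleton, add_zero]

theorem volume_image_coe_Icc (t m : ℝ) :
    volume ((↑) '' Icc t m : Set (AddCircle T)) = ENNReal.ofReal (min (m - t) T) := by
  rcases le_total m (t + T) with hm | hm
  · rw [volume_image_coe_of_subset_Icc measurableSet_Icc (Icc_subset_Icc_right hm),
      Real.volume_Icc, min_eq_left (by linarith)]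
  · rw [eq_univ_of_univ_subset ((coe_image_Icc_eq T t).symm.trans_subset
      (image_mono (Icc_subset_Icc_right hm))), AddCircle.measure_univ, min_eq_right (by linarith)]

end AddCircle

theorem Set.smul_Icc_of_nonneg {K : Type*} [Field K] [LinearOrder K] [IsStrictOrderedRing K]
    {r a b : K} (hr : 0 ≤ r) (hab : a ≤ b) :
    r • Icc a b = Icc (r * a) (r * b) := by
  rw [← image_smul]
  exact image_mul_left_Icc hr hab

theorem smul_cantorSet_subset {c : ℝ} (hc : 0 ≤ c) : (c / 2) • cantorSet ⊆ Icc 0 (c / 2) :=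
  calc (c / 2) • cantorSet ⊆ (c / 2) • Icc 0 1 := smul_set_mono cantorSet_subset_unitInterval
    _ = Icc 0 (c / 2) := by rw [smul_Icc_of_nonneg (by positivity) zero_le_one, mul_zero, mul_one]

theorem smul_cantorSet_add_self {c : ℝ} (hc : 0 ≤ c) :
    (c / 2) • cantorSet + (c / 2) • cantorSet = Icc 0 c := by
  rw [← smul_add, cantorSet_add_cantorSet, smul_Icc_of_nonneg (by positivity) zero_le_two]
  norm_num

theorem volume_smul_cantorSet_union_Icc (c a : ℝ) :
    volume ((c / 2) • cantorSet ∪ Icc 0 a) = ENNReal.ofReal a := by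
  have hnull : volume ((c / 2) • cantorSet) = 0 := by
    rw [Measure.addHaar_smul, volume_cantorSet, mul_zero]
  rw [measure_congr (union_ae_eq_right_of_ae_eq_empty (ae_eq_empty.2 hnull)), Real.volume_Icc,
    sub_zero]

theorem smul_cantorSet_union_Icc_subset {c : ℝ} (hc : 0 ≤ c) (a : ℝ) :
    (c / 2) • cantorSet ∪ Icc 0 a ⊆ Icc 0 (max (c / 2) a) :=
  union_subset ((smul_cantorSet_subset hc).trans (Icc_subset_Icc_right (le_max_left _ _)))
    (Icc_subset_Icc_right (le_max_right _ _))

theorem smul_cantorSet_union_Icc_add_self {c a : ℝ} (hc : 0 ≤ c) (ha : 0 ≤ a) :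
    ((c / 2) • cantorSet ∪ Icc 0 a) + ((c / 2) • cantorSet ∪ Icc 0 a) = Icc 0 (max c (2 * a)) := by
  refine subset_antisymm ?_ ?_
  · have hS := smul_cantorSet_union_Icc_subset hc a
    calc _ ⊆ Icc 0 (max (c / 2) a) + Icc 0 (max (c / 2) a) := add_subset_add hS hS
      _ = Icc 0 (max c (2 * a)) := by
        rw [Icc_add_Icc (le_max_of_le_right ha) (le_max_of_le_right ha), zero_add, ← two_mul,
          mul_max_of_nonneg _ _ zero_le_two, mul_div_cancel₀ c two_ne_zero]
  · rcases max_choice c (2 * a) with h | h <;> rw [h]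
    · rw [← smul_cantorSet_add_self hc]
      exact add_subset_add subset_union_left subset_union_left
    · calc Icc 0 (2 * a) = Icc 0 a + Icc 0 a := by rw [Icc_add_Icc ha ha, zero_add, two_mul]
        _ ⊆ _ := add_subset_add subset_union_right subset_union_right

/-- For any `(α, β) ∈ [0,1]²` with `β ≥ min(2α, 1)`, there is a measurable subset `A` of the
circle `𝕋 = ℝ/ℤ` such that `A + A` is measurable, `μ(A) = α` and `μ(A + A) = β`, where `μ` is
the Haar probability measure on `𝕋`. -/
theorem stmt_1 (α β : ℝ) (hα : α ∈ Set.Icc (0:ℝ) 1) (hβ : β ∈ Set.Icc (0:ℝ) 1)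
    (h : min (2 * α) 1 ≤ β) :
    ∃ A : Set UnitAddCircle, MeasurableSet A ∧ MeasurableSet (A + A) ∧
      volume A = ENNReal.ofReal α ∧ volume (A + A) = ENNReal.ofReal β := by
  obtain ⟨hα0, hα1⟩ := hα
  obtain ⟨hβ0, hβ1⟩ := hβ
  set S : Set ℝ := (β / 2) • cantorSet ∪ Icc 0 α
  have hS : MeasurableSet S :=
    (isCompact_cantorSet.smul (β / 2)).isClosed.measurableSet.union measurableSet_Icc
  have hSS : ((↑) '' S + (↑) '' S : Set UnitAddCircle) = (↑) '' Icc 0 (max β (2 * α)) := by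
    rw [← smul_cantorSet_union_Icc_add_self hβ0 hα0]
    exact (image_add (QuotientAddGroup.mk' _)).symm
  have hS_unit : S ⊆ Icc 0 (0 + 1) := (smul_cantorSet_union_Icc_subset hβ0 α).trans
    (Icc_subset_Icc_right (by rw [zero_add]; exact max_le (by linarith) hα1))
  refine ⟨(↑) '' S, QuotientAddGroup.measurableSet_image_mk _ hS, ?_, ?_, ?_⟩
  · rw [hSS]
    exact QuotientAddGroup.measurableSet_image_mk _ measurableSet_Icc
  · rw [AddCircle.volume_image_coe_of_subset_Icc hS hS_unit, volume_smul_cantorSet_union_Icc]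
  · rw [hSS, AddCircle.volume_image_coe_Icc, sub_zero]
    rcases min_le_iff.mp h with h2α | h1
    · rw [max_eq_left h2α, min_eq_left hβ1]
    · rw [le_antisymm hβ1 h1, min_eq_right (le_max_left _ _)]
end

section
/- Let λ be an irrational real number and let f : [0,1] → ℝ be a bounded function whose set of discontinuity points has Lebesgue measure zero (i.e., f is Riemann-integrable). Then (1/x) ∑_{1 ≤ n ≤ x} f({λn}) converges to ∫₀¹ f(t) dt as x → ∞, where {y} denotes the fractional part of the real number y. -/
/-!
For irrational `λ`, the Birkhoff averages of the rotation `z ↦ z + λ` of `ℝ/ℤ` applied to a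
Fourier monomial `e_n`, `n ≠ 0`, are geometric means of `e_n(λ) ≠ 1`, hence tend to `0`. The
averages are `1`-Lipschitz in the sup norm and trigonometric polynomials are dense, so the averages
of every continuous function tend to its integral (Weyl). A bounded function `F` continuous almost
everywhere is squeezed between the Lipschitz envelopes `x ↦ sup_y (±F y - k d(x, y))`, which tend
to `F` at its continuity points; by dominated convergence their integrals tend to `∫ F`. Finally
`f` on `[0, 1]` is read on the circle through the fundamental domain `[0, 1)`, which changes
neither the sums `f({λ n})`, nor the integral, nor the discontinuity set up to a null set.
-/

open Filter Topology MeasureTheory Set AddCircle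
open scoped BoundedContinuousFunction

section BirkhoffAverage

variable {α : Type*}

theorem birkhoffAverage_mono {f : α → α} {g g' : α → ℝ} (h : g ≤ g') (n : ℕ) (x : α) :
    birkhoffAverage ℝ f g n x ≤ birkhoffAverage ℝ f g' n x := by
  unfold birkhoffAverage birkhoffSum
  gcongr with k
  exact h _

theorem norm_birkhoffAverage_le {𝕜 E : Type*} [RCLike 𝕜] [NormedAddCommGroup E] [NormedSpace 𝕜 E]
    {f : α → α} {g : α → E} {C : ℝ} (h : ∀ y, ‖g y‖ ≤ C) (n : ℕ) (x : α) :
    ‖birkhoffAverage 𝕜 f g n x‖ ≤ C := by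
  rcases eq_or_ne n 0 with rfl | hn
  · simpa using (norm_nonneg _).trans (h x)
  calc ‖birkhoffAverage 𝕜 f g n x‖ ≤ (n : ℝ)⁻¹ * ∑ k ∈ Finset.range n, ‖g (f^[k] x)‖ := by
        rw [birkhoffAverage, birkhoffSum, norm_smul, norm_inv, RCLike.norm_natCast]
        gcongr
        exact norm_sum_le _ _
    _ ≤ (n : ℝ)⁻¹ * ∑ k ∈ Finset.range n, C := by gcongr; exact h _
    _ = C := by simp [hn]

theorem birkhoffAverage_const_smul {𝕜 E : Type*} [Field 𝕜] [CharZero 𝕜] [AddCommGroup E]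
    [Module 𝕜 E] (f : α → α) (c : 𝕜) (g : α → E) (n : ℕ) (x : α) :
    birkhoffAverage 𝕜 f (c • g) n x = c • birkhoffAverage 𝕜 f g n x := by
  simp only [birkhoffAverage, birkhoffSum, Pi.smul_apply, ← Finset.smul_sum, smul_comm c]

theorem birkhoffSum_add_self {M E : Type*} [AddMonoid M] [AddCommMonoid E] (a : M) (g : M → E)
    (N : ℕ) : birkhoffSum (· + a) g N a = ∑ n ∈ Finset.Icc 1 N, g (n • a) := by
  rw [birkhoffSum, ← Finset.Ico_add_one_right_eq_Icc, Finset.sum_Ico_eq_sum_range,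
    Nat.add_sub_cancel]
  simp only [add_right_iterate_apply, add_comm 1, succ_nsmul']

end BirkhoffAverage

section ContinuousMap

variable {X : Type*} [TopologicalSpace X] [CompactSpace X]

theorem lipschitzWith_birkhoffAverage_continuousMap (f : X → X) (n : ℕ) (x : X) :
    LipschitzWith 1 fun φ : C(X, ℂ) ↦ birkhoffAverage ℂ f φ n x := by
  refine LipschitzWith.of_dist_le_mul fun φ ψ ↦ ?_
  simpa [dist_eq_norm, birkhoffAverage_sub] using
    norm_birkhoffAverage_le (𝕜 := ℂ) (f := f) ((φ - ψ).norm_coe_le_norm) n x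

variable [MeasurableSpace X] [BorelSpace X] (μ : Measure X) [IsFiniteMeasure μ]

theorem continuous_integral_continuousMap : Continuous fun φ : C(X, ℂ) ↦ ∫ y, φ y ∂μ :=
  (continuous_integral.comp (ContinuousMap.toLp 1 μ ℂ).continuous).congr fun φ ↦
    integral_congr_ae (ContinuousMap.coeFn_toLp μ φ)

def birkhoffAverageTendstoIntegral (f : X → X) (x : X) : Submodule ℂ C(X, ℂ) where
  carrier := {φ | Tendsto (birkhoffAverage ℂ f φ · x) atTop (𝓝 (∫ y, φ y ∂μ))}
  zero_mem' := by simp [birkhoffAverage, birkhoffSum]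
  add_mem' {φ ψ} hφ hψ := by
    simpa [birkhoffAverage_add,
      integral_add (φ.continuous.integrable_of_hasCompactSupport (.of_compactSpace _))
        (ψ.continuous.integrable_of_hasCompactSupport (.of_compactSpace _))] using hφ.add hψ
  smul_mem' c φ hφ := by
    simpa [birkhoffAverage_const_smul, integral_const_mul] using hφ.const_mul c

theorem isClosed_birkhoffAverageTendstoIntegral (f : X → X) (x : X) :
    IsClosed (birkhoffAverageTendstoIntegral μ f x : Set C(X, ℂ)) :=
  (LipschitzWith.uniformEquicontinuous _ 1 fun n ↦
    lipschitzWith_birkhoffAverage_continuousMap f n x).equicontinuous.isClosed_setOfPred_tendsto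
    (continuous_integral_continuousMap μ)

end ContinuousMap

theorem tendsto_inv_mul_geom_sum_of_norm_eq_one {z : ℂ} (hz : ‖z‖ = 1) (hz1 : z ≠ 1) :
    Tendsto (fun n : ℕ ↦ (n : ℂ)⁻¹ * ∑ k ∈ Finset.range n, z ^ k) atTop (𝓝 0) := by
  have hbound (n : ℕ) : ‖∑ k ∈ Finset.range n, z ^ k‖ ≤ 2 / ‖z - 1‖ := by
    rw [geom_sum_eq hz1, norm_div]
    gcongr
    calc ‖z ^ n - 1‖ ≤ ‖z ^ n‖ + ‖(1 : ℂ)‖ := norm_sub_le _ _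
      _ = 2 := by rw [norm_pow, hz]; norm_num
  have hdecay : Tendsto (fun n : ℕ ↦ 2 / ‖z - 1‖ / n) atTop (𝓝 0) :=
    tendsto_const_nhds.div_atTop tendsto_natCast_atTop_atTop
  refine squeeze_zero_norm (fun n ↦ ?_) hdecay
  rw [norm_mul, norm_inv, Complex.norm_natCast, inv_mul_eq_div]
  gcongr
  exact hbound n

namespace AddCircle

variable {T : ℝ}

theorem fourier_apply_add (n : ℤ) (x y : AddCircle T) :
    fourier n (x + y) = fourier n x * fourier n y := by
  simp only [fourier_apply, smul_add, toCircle_add, Circle.coe_mul]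

theorem fourier_apply_nsmul (n : ℤ) (k : ℕ) (x : AddCircle T) :
    fourier n (k • x) = fourier n x ^ k := by
  simp only [fourier_apply, smul_comm n k, toCircle_nsmul, Circle.coe_pow]

theorem birkhoffAverage_add_fourier (a : AddCircle T) (n : ℤ) (N : ℕ) (x : AddCircle T) :
    birkhoffAverage ℂ (· + a) (fourier n) N x =
      fourier n x * ((N : ℂ)⁻¹ * ∑ k ∈ Finset.range N, fourier n a ^ k) := by
  simp only [birkhoffAverage, birkhoffSum, add_right_iterate_apply, fourier_apply_add, smul_eq_mul,
    fourier_apply_nsmul, ← Finset.mul_sum]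
  ring

variable [hT : Fact (0 < T)] {a : AddCircle T}

theorem integral_fourier_haarAddCircle {n : ℤ} (hn : n ≠ 0) :
    ∫ x, fourier n x ∂(haarAddCircle (T := T)) = (0 : ℂ) :=
  integral_eq_zero_of_add_right_eq_neg (fourier_add_half_inv_index hn hT.out)

theorem fourier_ne_one_of_not_isOfFinAddOrder (ha : ¬IsOfFinAddOrder a) {n : ℤ} (hn : n ≠ 0) :
    fourier n a ≠ 1 := by
  rw [fourier_apply, ← fourier_zero' (T := T), Ne, Circle.coe_inj,
    (injective_toCircle hT.out.ne').eq_iff]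
  exact fun h ↦ ha (isOfFinAddOrder_iff_zsmul_eq_zero.2 ⟨n, hn, h⟩)

theorem tendsto_birkhoffAverage_add_fourier (ha : ¬IsOfFinAddOrder a) (n : ℤ) (x : AddCircle T) :
    Tendsto (birkhoffAverage ℂ (· + a) (fourier n) · x) atTop
      (𝓝 (∫ y, fourier n y ∂(haarAddCircle (T := T)))) := by
  simp_rw [birkhoffAverage_add_fourier]
  rcases eq_or_ne n 0 with rfl | hn
  · refine tendsto_const_nhds.congr' ((eventually_ne_atTop 0).mono fun N hN ↦ ?_)
    simp [hN]
  · rw [integral_fourier_haarAddCircle hn, ← mul_zero (fourier n x)]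
    exact (tendsto_inv_mul_geom_sum_of_norm_eq_one (Circle.norm_coe _)
      (fourier_ne_one_of_not_isOfFinAddOrder ha hn)).const_mul _

theorem tendsto_birkhoffAverage_add_integral (ha : ¬IsOfFinAddOrder a) (φ : C(AddCircle T, ℂ))
    (x : AddCircle T) :
    Tendsto (birkhoffAverage ℂ (· + a) φ · x) atTop (𝓝 (∫ y, φ y ∂haarAddCircle)) := by
  have hspan : Submodule.span ℂ (range fourier) ≤
      birkhoffAverageTendstoIntegral haarAddCircle (· + a) x :=
    Submodule.span_le.2 (range_subset_iff.2 fun n ↦ tendsto_birkhoffAverage_add_fourier ha n x)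
  have := Submodule.topologicalClosure_minimal _ hspan
    (isClosed_birkhoffAverageTendstoIntegral haarAddCircle (· + a) x)
  rw [span_fourier_closure_eq_top] at this
  exact this (Submodule.mem_top (x := φ))

theorem tendsto_birkhoffAverage_add_integral_real (ha : ¬IsOfFinAddOrder a)
    (G : AddCircle T →ᵇ ℝ) (x : AddCircle T) :
    Tendsto (birkhoffAverage ℝ (· + a) G · x) atTop (𝓝 (∫ y, G y ∂haarAddCircle)) := by
  have := (Complex.continuous_re.tendsto _).comp
    (tendsto_birkhoffAverage_add_integral ha ⟨fun y ↦ (G y : ℂ), by fun_prop⟩ x)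
  simp only [ContinuousMap.coe_mk, integral_complex_ofReal, Complex.ofReal_re] at this
  refine this.congr fun N ↦ ?_
  change (birkhoffAverage ℂ (· + a) (Complex.ofRealHom ∘ G) N x).re = _
  rw [← map_birkhoffAverage ℝ ℂ, Complex.ofRealHom_eq_coe, Complex.ofReal_re]

end AddCircle

section LipschitzMajorant

variable {X : Type*} [PseudoMetricSpace X]

/-- The Pasch–Hausdorff envelope: for `F` bounded above and `K ≥ 0`, the least `K`-Lipschitz
function above `F`. -/
noncomputable def lipschitzMajorant (F : X → ℝ) (K : ℝ) (x : X) : ℝ :=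
  ⨆ y, F y - K * dist x y

variable {F : X → ℝ} {K : ℝ}

theorem bddAbove_range_sub_mul_dist (hF : BddAbove (range F)) (hK : 0 ≤ K) (x : X) :
    BddAbove (range fun y ↦ F y - K * dist x y) := by
  obtain ⟨C, hC⟩ := hF
  refine ⟨C, forall_mem_range.2 fun y ↦ ?_⟩
  have := hC (mem_range_self y)
  nlinarith [mul_nonneg hK (dist_nonneg (x := x) (y := y))]

theorem le_lipschitzMajorant (hF : BddAbove (range F)) (hK : 0 ≤ K) (x : X) :
    F x ≤ lipschitzMajorant F K x := by
  simpa [lipschitzMajorant] using le_ciSup (bddAbove_range_sub_mul_dist hF hK x) x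

theorem lipschitzMajorant_le {C : ℝ} (hC : ∀ y, F y ≤ C) (hK : 0 ≤ K) (x : X) :
    lipschitzMajorant F K x ≤ C :=
  have : Nonempty X := ⟨x⟩
  ciSup_le fun y ↦ by nlinarith [hC y, mul_nonneg hK (dist_nonneg (x := x) (y := y))]

theorem lipschitzMajorant_le_add_mul_dist (hF : BddAbove (range F)) (hK : 0 ≤ K) (x x' : X) :
    lipschitzMajorant F K x ≤ lipschitzMajorant F K x' + K * dist x x' :=
  have : Nonempty X := ⟨x⟩
  ciSup_le fun y ↦ by
    have h₁ : F y - K * dist x' y ≤ lipschitzMajorant F K x' :=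
      le_ciSup (bddAbove_range_sub_mul_dist hF hK x') y
    have h₂ := mul_le_mul_of_nonneg_left (dist_triangle_left x' y x) hK
    linarith

theorem lipschitzWith_lipschitzMajorant (hF : BddAbove (range F)) (K : NNReal) :
    LipschitzWith K (lipschitzMajorant F K) :=
  LipschitzWith.of_le_add_mul K fun x x' ↦
    lipschitzMajorant_le_add_mul_dist hF K.2 x x'

theorem tendsto_lipschitzMajorant (hF : BddAbove (range F)) {x : X} (hx : ContinuousAt F x) :
    Tendsto (fun k : ℕ ↦ lipschitzMajorant F k x) atTop (𝓝 (F x)) := by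
  refine tendsto_order.2 ⟨fun b hb ↦ Eventually.of_forall fun k ↦
    hb.trans_le (le_lipschitzMajorant hF k.cast_nonneg x), fun b hb ↦ ?_⟩
  obtain ⟨b', hxb', hb'b⟩ := exists_between hb
  obtain ⟨δ, hδ, hnear⟩ := Metric.eventually_nhds_iff.1 (hx.eventually (gt_mem_nhds hxb'))
  obtain ⟨C, hC⟩ := hF
  filter_upwards [tendsto_natCast_atTop_atTop.eventually_ge_atTop ((C - b') / δ)] with k hk
  have : Nonempty X := ⟨x⟩
  refine (ciSup_le fun y ↦ ?_).trans_lt hb'b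
  have hCy : F y ≤ C := hC (mem_range_self y)
  have hk₀ : (0 : ℝ) ≤ k := k.cast_nonneg
  rcases lt_or_ge (dist y x) δ with hy | hy
  · nlinarith [hnear hy, mul_nonneg hk₀ (dist_nonneg (x := x) (y := y))]
  · rw [div_le_iff₀ hδ] at hk
    nlinarith [dist_comm x y, mul_le_mul_of_nonneg_left hy hk₀]

end LipschitzMajorant

section Sandwich

variable {X : Type*} [PseudoMetricSpace X] [MeasurableSpace X] [OpensMeasurableSpace X]
  {μ : Measure X} [IsFiniteMeasure μ] {f : X → X} {x : X} {F : X → ℝ} {C : ℝ}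

theorem eventually_birkhoffAverage_lt_of_ae_continuousAt
    (h : ∀ G : X →ᵇ ℝ, Tendsto (birkhoffAverage ℝ f G · x) atTop (𝓝 (∫ y, G y ∂μ)))
    (hC : ∀ y, |F y| ≤ C) (hF : ∀ᵐ y ∂μ, ContinuousAt F y) {b : ℝ} (hb : ∫ y, F y ∂μ < b) :
    ∀ᶠ N in atTop, birkhoffAverage ℝ f F N x < b := by
  have hbdd : BddAbove (range F) := ⟨C, forall_mem_range.2 fun y ↦ (le_abs_self _).trans (hC y)⟩
  have hG (k : ℕ) (y : X) : ‖lipschitzMajorant F k y‖ ≤ C := by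
    have := le_lipschitzMajorant hbdd k.cast_nonneg y
    rw [Real.norm_eq_abs, abs_le]
    exact ⟨by linarith [neg_abs_le (F y), hC y],
      lipschitzMajorant_le (fun y ↦ (le_abs_self _).trans (hC y)) k.cast_nonneg y⟩
  let G (k : ℕ) : X →ᵇ ℝ := .ofNormedAddCommGroup (lipschitzMajorant F k)
    (by simpa using (lipschitzWith_lipschitzMajorant hbdd k).continuous) C (hG k)
  have hGF : Tendsto (fun k ↦ ∫ y, G k y ∂μ) atTop (𝓝 (∫ y, F y ∂μ)) :=
    tendsto_integral_of_dominated_convergence (fun _ ↦ C)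
      (fun k ↦ (G k).continuous.aestronglyMeasurable) (integrable_const C)
      (fun k ↦ ae_of_all _ (hG k)) (hF.mono fun y hy ↦ tendsto_lipschitzMajorant hbdd hy)
  obtain ⟨k, hk⟩ := (hGF.eventually (gt_mem_nhds hb)).exists
  filter_upwards [(h (G k)).eventually (gt_mem_nhds hk)] with N hN
  exact (birkhoffAverage_mono (fun y ↦ le_lipschitzMajorant hbdd k.cast_nonneg y) N x).trans_lt hN

theorem tendsto_birkhoffAverage_of_ae_continuousAt
    (h : ∀ G : X →ᵇ ℝ, Tendsto (birkhoffAverage ℝ f G · x) atTop (𝓝 (∫ y, G y ∂μ)))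
    (hC : ∀ y, |F y| ≤ C) (hF : ∀ᵐ y ∂μ, ContinuousAt F y) :
    Tendsto (birkhoffAverage ℝ f F · x) atTop (𝓝 (∫ y, F y ∂μ)) := by
  refine tendsto_order.2 ⟨fun b hb ↦ ?_, fun b hb ↦
    eventually_birkhoffAverage_lt_of_ae_continuousAt h hC hF hb⟩
  have hneg := eventually_birkhoffAverage_lt_of_ae_continuousAt (F := -F) h
    (fun y ↦ (abs_neg (F y)).trans_le (hC y)) (hF.mono fun _ hy ↦ hy.neg)
    (b := -b) (by simpa [integral_neg] using hb)
  filter_upwards [hneg] with N hN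
  simpa [birkhoffAverage_neg] using hN

end Sandwich

namespace AddCircle

variable {T : ℝ} [hT : Fact (0 < T)] {a : ℝ}

theorem liftIco_one_zero_coe {B : Type*} (f : ℝ → B) (t : ℝ) :
    liftIco 1 0 f (t : UnitAddCircle) = f (Int.fract t) := by
  rw [← coe_fract, liftIco_zero_coe_apply ⟨Int.fract_nonneg t, Int.fract_lt_one t⟩]

theorem integral_liftIco {E : Type*} [NormedAddCommGroup E] [NormedSpace ℝ E] (f : ℝ → E) :
    ∫ z, liftIco T a f z = ∫ x in a..a + T, f x := by
  rw [← AddCircle.intervalIntegral_preimage T a]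
  refine intervalIntegral.integral_congr_ae ?_
  filter_upwards [Measure.ae_ne volume (a + T)] with x hx hxI
  rw [uIoc_of_le (le_add_of_nonneg_right hT.out.le)] at hxI
  exact liftIco_coe_apply ⟨hxI.1.le, hxI.2.lt_of_ne hx⟩

theorem continuousAt_liftIco {B : Type*} [TopologicalSpace B] {f : ℝ → B} {x : ℝ}
    (hx : x ∈ Ioo a (a + T)) (hf : ContinuousWithinAt f (Ico a (a + T)) x) :
    ContinuousAt (liftIco T a f) x := by
  have hxa : (x : AddCircle T) ≠ a := fun h ↦ hx.1.ne'
    ((coe_eq_coe_iff_of_mem_Ico (Ioo_subset_Ico_self hx)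
      (left_mem_Ico.2 (lt_add_of_pos_right a hT.out))).1 h)
  refine ContinuousAt.comp ?_ (continuousAt_equivIco T a hxa)
  rw [equivIco_coe_eq (Ioo_subset_Ico_self hx)]
  exact (continuousWithinAt_iff_continuousAt_domRestrict f (Ioo_subset_Ico_self hx)).1 hf

theorem ae_continuousAt_liftIco {B : Type*} [TopologicalSpace B]
    [TopologicalSpace.PseudoMetrizableSpace B] {f : ℝ → B}
    (hf : volume {x ∈ Icc a (a + T) | ¬ContinuousWithinAt f (Icc a (a + T)) x} = 0) :
    ∀ᵐ z : AddCircle T, ContinuousAt (liftIco T a f) z := by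
  rw [← (AddCircle.measurePreserving_mk T a).map_eq,
    ae_map_iff (AddCircle.measurePreserving_mk T a).measurable.aemeasurable
    (IsGδ.setOfPred_continuousAt _).measurableSet, ae_restrict_iff' measurableSet_Ioc]
  filter_upwards [measure_eq_zero_iff_ae_notMem.1 hf, Measure.ae_ne volume (a + T)]
    with x hcont hne hxI
  refine continuousAt_liftIco ⟨hxI.1, hxI.2.lt_of_ne hne⟩ (.mono ?_ Ico_subset_Icc_self)
  by_contra h
  exact hcont ⟨Ioc_subset_Icc_self hxI, h⟩

end AddCircle

theorem UnitAddCircle.haarAddCircle_eq_volume :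
    (haarAddCircle : Measure UnitAddCircle) = volume := by
  simp [volume_eq_smul_haarAddCircle]

/-- Weyl equidistribution for Riemann-integrable functions: if `λ` is irrational and
`f : [0,1] → ℝ` is bounded with a set of discontinuity points of Lebesgue measure zero,
then `(1/x) ∑_{1 ≤ n ≤ x} f({λ n}) → ∫₀¹ f` as `x → ∞`. -/
theorem stmt_3 (lam : ℝ) (hlam : Irrational lam) (f : ℝ → ℝ)
    (hbdd : ∃ M : ℝ, ∀ x ∈ Set.Icc (0:ℝ) 1, |f x| ≤ M)
    (hdisc : volume {x ∈ Set.Icc (0:ℝ) 1 | ¬ ContinuousWithinAt f (Set.Icc (0:ℝ) 1) x} = 0) :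
    Tendsto (fun x : ℕ => (1 / (x : ℝ)) * ∑ n ∈ Finset.Icc 1 x, f (Int.fract (lam * n)))
      atTop (𝓝 (∫ t in (0:ℝ)..1, f t)) := by
  obtain ⟨M, hM⟩ := hbdd
  have ha : ¬IsOfFinAddOrder (lam : UnitAddCircle) :=
    not_isOfFinAddOrder_iff_forall_rat_ne_div.2 fun q hq ↦ hlam ⟨q, by simpa using hq⟩
  have hF (z : UnitAddCircle) : |liftIco 1 0 f z| ≤ M :=
    hM _ (Ico_subset_Icc_self (by simpa using (equivIco 1 0 z).2))
  have h := tendsto_birkhoffAverage_of_ae_continuousAt (μ := haarAddCircle)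
    (fun G ↦ tendsto_birkhoffAverage_add_integral_real ha G (lam : UnitAddCircle)) hF
    (by simpa [UnitAddCircle.haarAddCircle_eq_volume] using
      ae_continuousAt_liftIco (by simpa using hdisc))
  rw [UnitAddCircle.haarAddCircle_eq_volume, integral_liftIco, zero_add] at h
  refine h.congr fun N ↦ ?_
  rw [birkhoffAverage, birkhoffSum_add_self, smul_eq_mul, one_div]
  congr 1
  refine Finset.sum_congr rfl fun n _ ↦ ?_
  rw [← coe_nsmul, nsmul_eq_mul, mul_comm, liftIco_one_zero_coe]
end

section
/- Let k ≥ 1 be an integer and β ∈ [0,1]. Then there exists a compact subset A ⊆ 𝕋 = ℝ/ℤ such that μ(iA) = 0 for every i with 1 ≤ i ≤ k, and μ((k+1)A) = β, where μ is the Haar probability measure on 𝕋. -/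
open MeasureTheory

/-- The `i`-fold sumset `iA = {a₁ + ⋯ + a_i : a_j ∈ A}` of a subset of the circle. -/
def iterSumsetT (i : ℕ) (A : Set UnitAddCircle) : Set UnitAddCircle :=
  {x | ∃ f : Fin i → UnitAddCircle, (∀ j, f j ∈ A) ∧ x = ∑ j, f j}

/-!
Take `b = k + 2` and let `D i ⊆ [0, 1]` be the set of reals having a base-`b` expansion with all
digits at most `i`. While `i < b`, adding such expansions digitwise produces no carries, so the
`i`-fold sumset of `D 1` is `D i`. For `i ≤ k` the set `D i` is covered by `i + 1` copies of itself
scaled by `1 / b`, and `(i + 1) / b < 1` forces it to be null; on the other hand `D (k + 1)` is all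
of `[0, 1]`. Take `A` to be the image of `β • D 1` in the circle: sumsets commute with this additive
map, and the projection `[0, β] → 𝕋` does not change measure.
-/

open Set Pointwise

theorem MeasureTheory.Measure.addHaar_eq_zero_of_subset_iUnion_smul_vadd {E ι : Type*}
    [NormedAddCommGroup E] [NormedSpace ℝ E] [MeasurableSpace E] [BorelSpace E]
    [FiniteDimensional ℝ E] (μ : Measure E) [μ.IsAddHaarMeasure] [Fintype ι] {S : Set E}
    (hS : μ S ≠ ⊤) {r : ℝ} (hr : Fintype.card ι * |r| ^ Module.finrank ℝ E < 1) (a : ι → E)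
    (hcover : S ⊆ ⋃ j, r • (a j +ᵥ S)) : μ S = 0 := by
  have hle : μ S ≤ ENNReal.ofReal (Fintype.card ι * |r| ^ Module.finrank ℝ E) * μ S :=
    calc μ S ≤ ∑ j, μ (r • (a j +ᵥ S)) :=
          (measure_mono hcover).trans (measure_iUnion_fintype_le _ _)
      _ = _ := by
        simp only [addHaar_smul, measure_vadd, Finset.sum_const, Finset.card_univ, nsmul_eq_mul]
        rw [← mul_assoc, ENNReal.ofReal_mul (by positivity), ENNReal.ofReal_natCast, abs_pow]
  by_contra h0
  have hlt := ENNReal.mul_lt_mul_left h0 hS (ENNReal.ofReal_lt_one.mpr hr)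
  rw [one_mul] at hlt
  exact (hle.trans_lt hlt).false

namespace Real

def boundedDigitSet (b i : ℕ) : Set ℝ :=
  ofDigits '' {d : ℕ → Fin b | ∀ n, (d n : ℕ) ≤ i}

theorem isCompact_boundedDigitSet (b i : ℕ) : IsCompact (boundedDigitSet b i) := by
  refine (IsClosed.isCompact ?_).image continuous_ofDigits
  simp only [ofPred_forall]
  exact isClosed_iInter fun n => IsClosed.preimage (f := fun d : ℕ → Fin b => d n)
    (continuous_apply n) (isClosed_discrete {x : Fin b | (x : ℕ) ≤ i})

theorem boundedDigitSet_subset_Icc (b i : ℕ) : boundedDigitSet b i ⊆ Icc 0 1 := by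
  rintro _ ⟨d, -, rfl⟩
  exact ⟨ofDigits_nonneg d, ofDigits_le_one d⟩

theorem boundedDigitSet_sub_one {b : ℕ} (hb : 1 < b) : boundedDigitSet b (b - 1) = Icc 0 1 := by
  refine (boundedDigitSet_subset_Icc b _).antisymm fun x hx => ?_
  obtain ⟨d, -, rfl⟩ := ofDigits_SurjOn hb hx
  exact ⟨d, fun n => Nat.le_sub_one_of_lt (d n).isLt, rfl⟩

theorem ofDigits_add {b : ℕ} {c d e : ℕ → Fin b} (h : ∀ n, (c n : ℕ) = d n + e n) :
    ofDigits c = ofDigits d + ofDigits e := by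
  rw [ofDigits, ofDigits, ofDigits, ← summable_ofDigitsTerm.tsum_add summable_ofDigitsTerm]
  congr 1
  ext n
  simp only [ofDigitsTerm, h n]
  push_cast
  ring

theorem boundedDigitSet_zero (b : ℕ) [NeZero b] : boundedDigitSet b 0 = {0} := by
  have h0 : ofDigits (fun _ => (0 : Fin b)) = 0 := by simp [ofDigits, ofDigitsTerm]
  refine Subset.antisymm ?_ ?_
  · rintro _ ⟨d, hd, rfl⟩
    obtain rfl : d = fun _ => 0 := funext fun n => Fin.ext (Nat.le_zero.mp (hd n))
    exact h0
  · rintro _ rfl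
    exact ⟨_, fun _ => le_rfl, h0⟩

theorem boundedDigitSet_add_one {b i : ℕ} (h : i + 1 < b) :
    boundedDigitSet b i + boundedDigitSet b 1 = boundedDigitSet b (i + 1) := by
  refine Subset.antisymm ?_ ?_
  · rintro _ ⟨_, ⟨d, hd, rfl⟩, _, ⟨e, he, rfl⟩, rfl⟩
    exact ⟨fun n => ⟨d n + e n, by grind⟩, fun n => by grind,
      ofDigits_add (d := d) (e := e) fun n => rfl⟩
  · rintro _ ⟨c, hc, rfl⟩
    refine ⟨_, ⟨fun n => ⟨min (c n : ℕ) i, by grind⟩, fun n => min_le_right _ _, rfl⟩,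
      _, ⟨fun n => ⟨c n - min (c n : ℕ) i, by grind⟩, fun n => by grind, rfl⟩, ?_⟩
    exact (ofDigits_add fun n => by grind).symm

theorem nsmul_boundedDigitSet_one {b i : ℕ} (h : i < b) :
    i • boundedDigitSet b 1 = boundedDigitSet b i := by
  induction i with
  | zero =>
    have : NeZero b := ⟨by omega⟩
    rw [zero_nsmul, boundedDigitSet_zero]
    rfl
  | succ i ih => rw [succ_nsmul, ih (by omega), boundedDigitSet_add_one h]

theorem boundedDigitSet_subset_iUnion_smul_vadd (b i : ℕ) :
    boundedDigitSet b i ⊆ ⋃ j : Fin (i + 1), (b⁻¹ : ℝ) • ((j : ℝ) +ᵥ boundedDigitSet b i) := by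
  rintro _ ⟨d, hd, rfl⟩
  refine mem_iUnion.mpr ⟨⟨d 0, Nat.lt_succ_of_le (hd 0)⟩,
    _, ⟨_, ⟨_, fun n => hd (n + 1), rfl⟩, rfl⟩, ?_⟩
  rw [ofDigits_eq_sum_add_ofDigits d 1]
  simp only [vadd_eq_add, smul_eq_mul, Finset.range_one, ofDigitsTerm, Finset.sum_singleton,
    zero_add, pow_one]
  ring

theorem volume_boundedDigitSet {b i : ℕ} (h : i + 1 < b) : volume (boundedDigitSet b i) = 0 := by
  refine Measure.addHaar_eq_zero_of_subset_iUnion_smul_vadd volume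
    (isCompact_boundedDigitSet b i).measure_lt_top.ne ?_ _
    (boundedDigitSet_subset_iUnion_smul_vadd b i)
  have hb : (0 : ℝ) < b := by exact_mod_cast (by omega : 0 < b)
  rw [Fintype.card_fin, Module.finrank_self, pow_one, abs_inv, Nat.abs_cast,
    ← div_eq_mul_inv, div_lt_one hb]
  exact_mod_cast h

end Real

namespace AddCircle

variable {T : ℝ} [Fact (0 < T)]

theorem volume_coe_image_of_subset_Ioc {t : ℝ} {S : Set ℝ} (hS : S ⊆ Ioc t (t + T)) :
    volume (((↑) : ℝ → AddCircle T) '' S) = volume S := by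
  have hpre : ((↑) : ℝ → AddCircle T) '' S = measurableEquivIoc T t ⁻¹' (Subtype.val ⁻¹' S) := by
    ext x
    constructor
    · rintro ⟨y, hy, rfl⟩
      show (equivIoc T t y : ℝ) ∈ S
      rwa [equivIoc_coe_eq (hS hy)]
    · exact fun hx => ⟨_, hx, (equivIoc T t).symm_apply_apply x⟩
  rw [hpre, MeasurePreserving.measure_preimage_equiv (f := measurableEquivIoc T t)
    (measurePreserving_equivIoc T),
    (MeasurableEmbedding.subtype_coe measurableSet_Ioc).comap_apply, Subtype.image_preimage_coe,
    inter_eq_right.mpr hS]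

theorem volume_coe_image_of_subset_Icc {t : ℝ} {S : Set ℝ} (hS : S ⊆ Icc t (t + T)) :
    volume (((↑) : ℝ → AddCircle T) '' S) = volume S := by
  set S' := S ∩ Ioc t (t + T)
  have hS' : S ⊆ insert t S' := fun x hx =>
    (hS hx).1.eq_or_lt.imp Eq.symm fun h => ⟨hx, h, (hS hx).2⟩
  have hpoint : volume {(t : AddCircle T)} = 0 := by
    simpa using volume_closedBall T (x := (t : AddCircle T)) 0
  have himage :
      volume (((↑) : ℝ → AddCircle T) '' S) = volume (((↑) : ℝ → AddCircle T) '' S') := by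
    refine le_antisymm ?_ (measure_mono (image_mono inter_subset_left))
    calc volume (((↑) : ℝ → AddCircle T) '' S)
        ≤ volume {(t : AddCircle T)} + volume (((↑) : ℝ → AddCircle T) '' S') := by
          refine (measure_mono ?_).trans (measure_union_le _ _)
          exact (image_mono hS').trans (image_insert_eq ..).subset
      _ = _ := by rw [hpoint, zero_add]
  have hreal : volume S = volume S' :=
    le_antisymm ((measure_mono hS').trans (measure_congr (insert_ae_eq_self t S')).le)
      (measure_mono inter_subset_left)
  rw [himage, hreal, volume_coe_image_of_subset_Ioc inter_subset_right]

theorem volume_coe_image_smul {β : ℝ} (hβ0 : 0 ≤ β) (hβT : β ≤ T) {S : Set ℝ}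
    (hS : S ⊆ Icc 0 1) :
    volume (((↑) : ℝ → AddCircle T) '' (β • S)) = ENNReal.ofReal β * volume S := by
  have hβS : β • S ⊆ Icc 0 (0 + T) := by
    rintro _ ⟨x, hx, rfl⟩
    exact ⟨mul_nonneg hβ0 (hS hx).1, by
      rw [zero_add]
      exact (mul_le_of_le_one_right hβ0 (hS hx).2).trans hβT⟩
  rw [volume_coe_image_of_subset_Icc hβS, Measure.addHaar_smul, Module.finrank_self, pow_one,
    abs_of_nonneg hβ0]

end AddCircle

theorem iterSumsetT_eq_nsmul (i : ℕ) (A : Set UnitAddCircle) : iterSumsetT i A = i • A := by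
  ext x
  rw [Set.mem_nsmul]
  constructor
  · rintro ⟨f, hf, rfl⟩
    exact ⟨fun j => ⟨f j, hf j⟩, List.sum_ofFn⟩
  · rintro ⟨f, rfl⟩
    exact ⟨fun j => f j, fun j => (f j).2, List.sum_ofFn⟩

theorem stmt_9_general (k : ℕ) (β : ℝ) (hβ : β ∈ Set.Icc (0:ℝ) 1) :
    ∃ A : Set UnitAddCircle, IsCompact A ∧
      (∀ i, 1 ≤ i → i ≤ k → volume (iterSumsetT i A) = 0) ∧
      volume (iterSumsetT (k + 1) A) = ENNReal.ofReal β := by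
  obtain ⟨hβ0, hβ1⟩ := hβ
  let D := Real.boundedDigitSet (k + 2)
  let φ : ℝ →+ UnitAddCircle :=
    (QuotientAddGroup.mk' _).comp (DistribSMul.toAddMonoidHom ℝ β)
  have hsumset : ∀ i ≤ k + 1, iterSumsetT i (φ '' D 1) = φ '' D i := fun i hi => by
    rw [iterSumsetT_eq_nsmul, ← image_nsmul, Real.nsmul_boundedDigitSet_one (by omega)]
  have hvolume : ∀ i, volume (φ '' D i) = ENNReal.ofReal β * volume (D i) := fun i => by
    rw [← AddCircle.volume_coe_image_smul hβ0 hβ1 (Real.boundedDigitSet_subset_Icc _ i),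
      ← image_smul, image_image]
    rfl
  have hφ : Continuous φ := (AddCircle.continuous_mk' 1).comp (continuous_const_smul β)
  refine ⟨φ '' D 1, (Real.isCompact_boundedDigitSet _ 1).image hφ, ?_, ?_⟩
  · intro i _ hik
    rw [hsumset i (by omega), hvolume, Real.volume_boundedDigitSet (by omega), mul_zero]
  · have hfull : D (k + 1) = Icc 0 1 := Real.boundedDigitSet_sub_one (by omega)
    rw [hsumset _ le_rfl, hvolume, hfull, Real.volume_Icc, sub_zero, ENNReal.ofReal_one, mul_one]

/-- For every `k ≥ 1` and `β ∈ [0,1]` there is a compact subset `A ⊆ 𝕋 = ℝ/ℤ` with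
`μ(iA) = 0` for `1 ≤ i ≤ k` and `μ((k+1)A) = β`, where `μ` is the Haar probability
measure on `𝕋`. -/
theorem stmt_9 (k : ℕ) (hk : 1 ≤ k) (β : ℝ) (hβ : β ∈ Set.Icc (0:ℝ) 1) :
    ∃ A : Set UnitAddCircle, IsCompact A ∧
      (∀ i, 1 ≤ i → i ≤ k → volume (iterSumsetT i A) = 0) ∧
      volume (iterSumsetT (k + 1) A) = ENNReal.ofReal β :=
  stmt_9_general k β hβ
end

section
/- Let k ≥ 1 and let A ⊆ 𝕋 = ℝ/ℤ be a disjoint union of k intervals (arcs). Then μ(A+A) ≤ (k+1)·μ(A), where μ is the Haar probability measure on 𝕋. -/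
/-!
Write `Bᵢ` for the image of `Iᵢ` in `𝕋`. Then `A + A` is covered by the sets `Bᵢ + Bⱼ` with
`i ≤ j`, and `Bᵢ + Bⱼ` is the image of `Iᵢ + Iⱼ`. The image in `𝕋` of any `s ⊆ ℝ` has measure
at most `min (diam s) 1`, and if `s` is an interval at least that much, since `s` then contains
an interval of length `min (diam s) 1` on which the projection is injective. As
`diam (Iᵢ + Iⱼ) ≤ diam Iᵢ + diam Iⱼ`, this gives `μ(Bᵢ + Bⱼ) ≤ μ(Bᵢ) + μ(Bⱼ)`, and summing over
the pairs `i ≤ j` counts every `μ(Bᵢ)` exactly `k + 1` times.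
-/

open MeasureTheory Set Metric
open scoped ENNReal Pointwise

namespace UnitAddCircle

local notation "π" => ((↑) : ℝ → UnitAddCircle)

lemma coe_image_eq_measurableEquivIoc_symm_image {s : Set ℝ} {c : ℝ} (h : s ⊆ Ioc c (c + 1)) :
    π '' s = (AddCircle.measurableEquivIoc 1 c).symm '' (Subtype.val ⁻¹' s) := by
  change _ = (π ∘ (Subtype.val : Ioc c (c + 1) → ℝ)) '' _
  rw [image_comp, Subtype.image_preimage_coe, inter_eq_right.2 h]

lemma volume_coe_image_of_subset_Ioc {s : Set ℝ} {c : ℝ} (h : s ⊆ Ioc c (c + 1)) :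
    volume (π '' s) = volume s := by
  rw [coe_image_eq_measurableEquivIoc_symm_image h, MeasurableEquiv.image_symm,
    (AddCircle.measurePreserving_equivIoc 1).measure_preimage_equiv,
    (MeasurableEmbedding.subtype_coe measurableSet_Ioc).comap_apply, Subtype.image_preimage_coe,
    inter_eq_right.2 h]

lemma coe_image_eq_iUnion (s : Set ℝ) : π '' s = ⋃ n : ℤ, π '' (s ∩ Ioc (n : ℝ) (n + 1)) := by
  rw [← image_iUnion, ← inter_iUnion, iUnion_Ioc_intCast, inter_univ]

lemma measurableSet_coe_image {s : Set ℝ} (hs : MeasurableSet s) : MeasurableSet (π '' s) := by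
  rw [coe_image_eq_iUnion]
  refine .iUnion fun n => ?_
  rw [coe_image_eq_measurableEquivIoc_symm_image inter_subset_right]
  exact (AddCircle.measurableEquivIoc 1 _).symm.measurableEmbedding.measurableSet_image.2
    ((hs.inter measurableSet_Ioc).preimage measurable_subtype_coe)

lemma volume_coe_image_le (s : Set ℝ) : volume (π '' s) ≤ volume s := by
  wlog hs : MeasurableSet s
  · calc volume (π '' s) ≤ volume (π '' toMeasurable volume s) :=
          measure_mono (image_mono (subset_toMeasurable _ _))
      _ ≤ volume (toMeasurable volume s) := this _ (measurableSet_toMeasurable _ _)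
      _ = volume s := measure_toMeasurable s
  calc volume (π '' s)
      ≤ ∑' n : ℤ, volume (π '' (s ∩ Ioc (n : ℝ) (n + 1))) := by
        rw [coe_image_eq_iUnion]; exact measure_iUnion_le _
    _ = ∑' n : ℤ, volume (s ∩ Ioc (n : ℝ) (n + 1)) :=
        tsum_congr fun n => volume_coe_image_of_subset_Ioc inter_subset_right
    _ = volume s := by
        rw [← measure_iUnion, ← inter_iUnion, iUnion_Ioc_intCast, inter_univ]
        · exact fun m n hmn =>
            (pairwise_disjoint_Ioc_intCast ℝ hmn).mono inter_subset_right inter_subset_right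
        · exact fun n => hs.inter measurableSet_Ioc

lemma min_edist_le_volume_coe_image {s : Set ℝ} (hs : s.OrdConnected) {x y : ℝ} (hx : x ∈ s)
    (hy : y ∈ s) : min (edist x y) 1 ≤ volume (π '' s) := by
  wlog hxy : x ≤ y
  · rw [edist_comm]; exact this hs hy hx (le_of_not_ge hxy)
  have hIoc : Ioc x (min y (x + 1)) ⊆ Ioc x (x + 1) := Ioc_subset_Ioc_right (min_le_right _ _)
  calc min (edist x y) 1 = volume (Ioc x (min y (x + 1))) := by
        rw [Real.volume_Ioc, ← min_sub_sub_right, add_sub_cancel_left, ENNReal.ofReal_min,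
          ENNReal.ofReal_one, edist_dist, Real.dist_eq, abs_sub_comm,
          abs_of_nonneg (sub_nonneg.2 hxy)]
    _ = volume (π '' Ioc x (min y (x + 1))) :=
        (volume_coe_image_of_subset_Ioc hIoc).symm
    _ ≤ volume (π '' s) :=
        measure_mono <| image_mono <| Ioc_subset_Icc_self.trans <|
          (Icc_subset_Icc_right (min_le_left _ _)).trans (hs.out hx hy)

lemma min_ediam_le_volume_coe_image {s : Set ℝ} (hs : s.OrdConnected) :
    min (ediam s) 1 ≤ volume (π '' s) := by
  rcases le_or_gt 1 (volume (π '' s)) with h | h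
  · exact (min_le_right _ _).trans h
  refine min_le_of_left_le (ediam_le fun x hx y hy => ?_)
  have := min_edist_le_volume_coe_image hs hx hy
  rcases le_total (edist x y) 1 with hle | hle
  · rwa [min_eq_left hle] at this
  · rw [min_eq_right hle] at this; exact absurd h this.not_gt

lemma volume_coe_image_add_le {s t : Set ℝ} (hs : s.OrdConnected) (ht : t.OrdConnected) :
    volume (π '' s + π '' t) ≤ volume (π '' s) + volume (π '' t) :=
  calc volume (π '' s + π '' t) = volume (π '' (s + t)) :=
        congrArg volume (image_add (QuotientAddGroup.mk' (AddSubgroup.zmultiples (1 : ℝ)))).symm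
    _ ≤ min (ediam (s + t)) 1 :=
        le_min ((volume_coe_image_le _).trans (Real.volume_le_diam _))
          ((measure_mono (subset_univ _)).trans_eq UnitAddCircle.measure_univ)
    _ ≤ min (ediam s) 1 + min (ediam t) 1 := by
        grw [ediam_add_le, min_comm, min_add_distrib, min_comm (ediam s), min_comm (ediam t)]
        exact min_le_right _ _
    _ ≤ _ := add_le_add (min_ediam_le_volume_coe_image hs) (min_ediam_le_volume_coe_image ht)

end UnitAddCircle

theorem Finset.sum_filter_fst_le_snd_add {ι R : Type*} [Fintype ι] [LinearOrder ι]
    [CommSemiring R] (f : ι → R) :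
    ∑ p ∈ univ.filter (fun p : ι × ι => p.1 ≤ p.2), (f p.1 + f p.2) =
      (Fintype.card ι + 1) * ∑ i, f i := by
  have hswap : ∑ p ∈ univ.filter (fun p : ι × ι => p.1 ≤ p.2), f p.2 =
      ∑ p ∈ univ.filter (fun p : ι × ι => p.2 ≤ p.1), f p.1 :=
    sum_equiv (Equiv.prodComm ι ι) (by simp) (by simp)
  have hunion : univ.filter (fun p : ι × ι => p.1 ≤ p.2) ∪ univ.filter (fun p => p.2 ≤ p.1) =
      univ := by
    ext p; simp [le_total]
  have hinter : univ.filter (fun p : ι × ι => p.1 ≤ p.2) ∩ univ.filter (fun p => p.2 ≤ p.1) =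
      univ.diag := by
    ext p; simp [le_antisymm_iff]
  rw [sum_add_distrib, hswap, ← sum_union_inter, hunion, hinter, Fintype.sum_prod_type, sum_diag]
  simp only [sum_const, card_univ, nsmul_eq_mul]
  rw [add_mul, one_mul, mul_sum]

theorem Set.iUnion_add_iUnion_subset_biUnion_fst_le_snd {ι α : Type*} [Fintype ι] [LinearOrder ι]
    [AddCommMagma α] (B : ι → Set α) :
    (⋃ i, B i) + (⋃ i, B i) ⊆
      ⋃ p ∈ Finset.univ.filter (fun p : ι × ι => p.1 ≤ p.2), B p.1 + B p.2 := by
  rintro _ ⟨x, hx, y, hy, rfl⟩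
  obtain ⟨i, hxi⟩ := mem_iUnion.1 hx
  obtain ⟨j, hyj⟩ := mem_iUnion.1 hy
  rcases le_total i j with hij | hji
  · exact mem_biUnion (Finset.mem_filter.2 ⟨Finset.mem_univ (i, j), hij⟩) (add_mem_add hxi hyj)
  · exact mem_biUnion (Finset.mem_filter.2 ⟨Finset.mem_univ (j, i), hji⟩)
      ⟨y, hyj, x, hxi, add_comm y x⟩

theorem stmt_12_general (k : ℕ) (I : Fin k → Set ℝ)
    (hI : ∀ i, (I i).OrdConnected)
    (A : Set UnitAddCircle) (hA : A = ⋃ i, ((↑) : ℝ → UnitAddCircle) '' I i)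
    (hdisj : Pairwise fun i j =>
      Disjoint (((↑) : ℝ → UnitAddCircle) '' I i) (((↑) : ℝ → UnitAddCircle) '' I j)) :
    volume (A + A) ≤ ((k : ℝ≥0∞) + 1) * volume A := by
  set B : Fin k → Set UnitAddCircle := fun i => (↑) '' I i
  set P := Finset.univ.filter fun p : Fin k × Fin k => p.1 ≤ p.2
  have hvolA : volume A = ∑ i, volume (B i) := by
    rw [hA, measure_iUnion hdisj fun i =>
      UnitAddCircle.measurableSet_coe_image (hI i).measurableSet, tsum_fintype]
  calc volume (A + A) ≤ volume (⋃ p ∈ P, B p.1 + B p.2) :=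
        measure_mono (hA ▸ iUnion_add_iUnion_subset_biUnion_fst_le_snd B)
    _ ≤ ∑ p ∈ P, volume (B p.1 + B p.2) := measure_biUnion_finset_le _ _
    _ ≤ ∑ p ∈ P, (volume (B p.1) + volume (B p.2)) :=
        Finset.sum_le_sum fun p _ => UnitAddCircle.volume_coe_image_add_le (hI p.1) (hI p.2)
    _ = ((k : ℝ≥0∞) + 1) * volume A :=
        (Finset.sum_filter_fst_le_snd_add fun i => volume (B i)).trans
          (by rw [Fintype.card_fin, hvolA])

/-- If `A ⊆ 𝕋 = ℝ/ℤ` is a disjoint union of `k` arcs (images of real intervals under the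
projection `ℝ → ℝ/ℤ`), then `μ(A+A) ≤ (k+1)·μ(A)`, where `μ` is the Haar probability
measure on `𝕋`. -/
theorem stmt_12 (k : ℕ) (hk : 1 ≤ k) (I : Fin k → Set ℝ)
    (hI : ∀ i, (I i).OrdConnected)
    (A : Set UnitAddCircle) (hA : A = ⋃ i, ((↑) : ℝ → UnitAddCircle) '' I i)
    (hdisj : Pairwise fun i j =>
      Disjoint (((↑) : ℝ → UnitAddCircle) '' I i) (((↑) : ℝ → UnitAddCircle) '' I j)) :
    volume (A + A) ≤ ((k : ℝ≥0∞) + 1) * volume A :=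
  stmt_12_general k I hI A hA hdisj
end

section
/- Let s ≥ 1 be an integer and (α_1,…,α_s) ∈ (0,1)^s. Then there exists a constant C > 0 (depending only on s and the α_i) such that for all integers n ≥ 1, ∑ ∏_{i=1}^s u_i^{−α_i} ≤ C·n^{s−1−∑_i α_i}, where the sum runs over all s-tuples of integers (u_1,…,u_s) with 1 ≤ u_i ≤ n for all i and u_1 + ⋯ + u_s = n. -/
/-!
Since `u₁ + ⋯ + u_s = n`, some part satisfies `u_i ≥ n / s`, so its factor is at most
`s^{α_i} n^{-α_i}`. The remaining parts determine `u_i`, hence the sum over them is bounded by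
the product of the full sums `∑_{m ≤ n} m^{-α_j} = O(n^{1-α_j})`, obtained by comparison with
`∫₁ⁿ x^{-α_j} dx`. Multiplying out gives `n^{-α_i + ∑_{j ≠ i} (1 - α_j)} = n^{s-1-∑ α_j}`.
-/

open Finset

theorem sum_le_sum_sum_filter_of_forall_exists {ι α : Type*} [Fintype ι] (F : Finset α)
    (p : ι → α → Prop) [∀ i, DecidablePred (p i)] (f : α → ℝ) (hf : ∀ x ∈ F, 0 ≤ f x)
    (hp : ∀ x ∈ F, ∃ i, p i x) : ∑ x ∈ F, f x ≤ ∑ i, ∑ x ∈ F with p i x, f x := by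
  simp_rw [sum_filter]
  rw [sum_comm]
  refine sum_le_sum fun x hx => ?_
  obtain ⟨i, hi⟩ := hp x hx
  calc f x = if p i x then f x else 0 := (if_pos hi).symm
    _ ≤ ∑ i, if p i x then f x else 0 :=
      single_le_sum (f := fun i => if p i x then f x else 0)
        (fun i _ => by split_ifs <;> simp [hf x hx]) (mem_univ i)

theorem rpow_neg_le_of_le_mul {x y c a : ℝ} (hy : 0 < y) (hc : 0 < c) (ha : 0 ≤ a)
    (h : y ≤ c * x) : x ^ (-a) ≤ c ^ a * y ^ (-a) := by
  have hyc : 0 < y / c := div_pos hy hc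
  calc x ^ (-a) ≤ (y / c) ^ (-a) :=
        Real.rpow_le_rpow_of_nonpos hyc (by rwa [div_le_iff₀' hc]) (by linarith)
    _ = c ^ a * y ^ (-a) := by
        rw [Real.div_rpow hy.le hc.le, Real.rpow_neg hc.le, div_eq_mul_inv, inv_inv, mul_comm]

theorem sum_Icc_rpow_neg_le {a : ℝ} (ha₀ : 0 ≤ a) (ha₁ : a < 1) {n : ℕ} (hn : 1 ≤ n) :
    ∑ m ∈ Icc 1 n, (m : ℝ) ^ (-a) ≤ (1 + (1 - a)⁻¹) * (n : ℝ) ^ (1 - a) := by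
  have hanti : AntitoneOn (fun x : ℝ => x ^ (-a)) (Set.Icc (1 : ℕ) n) := fun x hx y _ hxy =>
    Real.rpow_le_rpow_of_nonpos (zero_lt_one.trans_le (by exact_mod_cast hx.1)) hxy (by linarith)
  have hint : ∫ x in (1 : ℕ)..(n : ℕ), x ^ (-a) = ((n : ℝ) ^ (1 - a) - 1) / (1 - a) := by
    rw [integral_rpow (Or.inl (by linarith))]
    simp [neg_add_eq_sub]
  have htail := hanti.sum_le_integral_Ico hn
  rw [hint] at htail
  have hsplit : ∑ m ∈ Icc 1 n, (m : ℝ) ^ (-a) = 1 + ∑ i ∈ Ico 1 n, ((i + 1 : ℕ) : ℝ) ^ (-a) := by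
    rw [← Ico_add_one_right_eq_Icc, sum_eq_sum_Ico_succ_bot (by omega),
      ← sum_Ico_add' (c := 1)]
    simp
  have hone : 1 ≤ (n : ℝ) ^ (1 - a) := Real.one_le_rpow (by exact_mod_cast hn) (by linarith)
  have h1a : 0 < 1 - a := by linarith
  rw [hsplit]
  calc 1 + ∑ i ∈ Ico 1 n, ((i + 1 : ℕ) : ℝ) ^ (-a) ≤ 1 + ((n : ℝ) ^ (1 - a) - 1) / (1 - a) := by
        gcongr
    _ ≤ (n : ℝ) ^ (1 - a) + (n : ℝ) ^ (1 - a) / (1 - a) := by gcongr; linarith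
    _ = _ := by ring

def compositions (s n : ℕ) : Finset (Fin s → ℕ) :=
  {u ∈ Fintype.piFinset fun _ : Fin s => Icc 1 n | ∑ i, u i = n}

theorem exists_le_mul_of_mem_compositions {s n : ℕ} (hs : 0 < s) {u : Fin s → ℕ}
    (hu : u ∈ compositions s n) : ∃ i, n ≤ s * u i := by
  have hsum : ∑ _i : Fin s, n ≤ ∑ i, s * u i := by
    rw [← mul_sum, (mem_filter.1 hu).2]
    simp
  obtain ⟨i, -, hi⟩ := exists_le_of_sum_le (univ_nonempty_iff.2 ⟨⟨0, hs⟩⟩) hsum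
  exact ⟨i, hi⟩

theorem injOn_comp_succAbove_compositions {k n : ℕ} (i : Fin (k + 1)) :
    Set.InjOn (fun u => u ∘ i.succAbove) (compositions (k + 1) n : Set (Fin (k + 1) → ℕ)) := by
  intro u hu v hv huv
  have hrest : ∀ j, u (i.succAbove j) = v (i.succAbove j) := congrFun huv
  have hi : u i = v i := by
    have hu' := (mem_filter.1 hu).2
    have hv' := (mem_filter.1 hv).2
    rw [Fin.sum_univ_succAbove _ i] at hu' hv'
    simp only [hrest] at hu'
    omega
  ext j
  rcases i.eq_self_or_eq_succAbove j with rfl | ⟨j, rfl⟩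
  exacts [hi, hrest j]

theorem sum_compositions_prod_succAbove_le {k n : ℕ} (i : Fin (k + 1)) (g : Fin k → ℕ → ℝ)
    (hg : ∀ j m, 0 ≤ g j m) :
    ∑ u ∈ compositions (k + 1) n, ∏ j, g j (u (i.succAbove j)) ≤ ∏ j, ∑ m ∈ Icc 1 n, g j m := by
  calc ∑ u ∈ compositions (k + 1) n, ∏ j, g j (u (i.succAbove j))
      = ∑ v ∈ (compositions (k + 1) n).image (· ∘ i.succAbove), ∏ j, g j (v j) :=
        (sum_image (f := fun v => ∏ j, g j (v j)) (injOn_comp_succAbove_compositions i)).symm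
    _ ≤ ∑ v ∈ Fintype.piFinset fun _ => Icc 1 n, ∏ j, g j (v j) := by
        refine sum_le_sum_of_subset_of_nonneg ?_ fun v _ _ => prod_nonneg fun j _ => hg j (v j)
        simp only [subset_iff, mem_image, Fintype.mem_piFinset]
        rintro _ ⟨u, hu, rfl⟩ j
        exact Fintype.mem_piFinset.1 (mem_filter.1 hu).1 _
    _ = ∏ j, ∑ m ∈ Icc 1 n, g j m := (prod_univ_sum _ _).symm

theorem sum_compositions_filter_prod_rpow_neg_le {k n : ℕ} (hn : 1 ≤ n) (α : Fin (k + 1) → ℝ)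
    (hα : ∀ i, α i ∈ Set.Ioo (0 : ℝ) 1) (i : Fin (k + 1)) :
    ∑ u ∈ compositions (k + 1) n with n ≤ (k + 1) * u i, ∏ j, (u j : ℝ) ^ (-α j) ≤
      ((k + 1 : ℝ) ^ α i * ∏ j, (1 + (1 - α (i.succAbove j))⁻¹)) *
        (n : ℝ) ^ (((k + 1 : ℕ) : ℝ) - 1 - ∑ j, α j) := by
  have hnR : (0 : ℝ) < n := by exact_mod_cast hn
  set c := (k + 1 : ℝ) ^ α i * (n : ℝ) ^ (-α i)
  have hexp : -α i + ∑ j, (1 - α (i.succAbove j)) = ((k + 1 : ℕ) : ℝ) - 1 - ∑ j, α j := by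
    rw [Fin.sum_univ_succAbove α i, sum_sub_distrib]
    simp only [sum_const, card_univ, Fintype.card_fin, nsmul_eq_mul, mul_one, Nat.cast_add,
      Nat.cast_one]
    ring
  calc ∑ u ∈ compositions (k + 1) n with n ≤ (k + 1) * u i, ∏ j, (u j : ℝ) ^ (-α j)
      ≤ ∑ u ∈ compositions (k + 1) n with n ≤ (k + 1) * u i,
          c * ∏ j, (u (i.succAbove j) : ℝ) ^ (-α (i.succAbove j)) := by
        refine sum_le_sum fun u hu => ?_
        rw [Fin.prod_univ_succAbove _ i]
        gcongr
        exact rpow_neg_le_of_le_mul hnR (by positivity) (hα i).1.le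
          (by exact_mod_cast (mem_filter.1 hu).2)
    _ ≤ c * ∑ u ∈ compositions (k + 1) n, ∏ j, (u (i.succAbove j) : ℝ) ^ (-α (i.succAbove j)) := by
        rw [mul_sum]
        exact sum_le_sum_of_subset_of_nonneg (filter_subset _ _) fun u _ _ => by positivity
    _ ≤ c * ∏ j, ∑ m ∈ Icc 1 n, (m : ℝ) ^ (-α (i.succAbove j)) := by
        gcongr
        exact sum_compositions_prod_succAbove_le i (fun j m => (m : ℝ) ^ (-α (i.succAbove j)))
          fun j m => by positivity
    _ ≤ c * ∏ j, (1 + (1 - α (i.succAbove j))⁻¹) * (n : ℝ) ^ (1 - α (i.succAbove j)) := by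
        gcongr with j
        exact sum_Icc_rpow_neg_le (hα _).1.le (hα _).2 hn
    _ = _ := by
        rw [prod_mul_distrib, ← Real.rpow_sum_of_pos hnR, ← hexp, Real.rpow_add hnR]
        ring

/-- For `s ≥ 1` and `(α₁,…,α_s) ∈ (0,1)^s` there is a constant `C > 0` such that for all
`n ≥ 1`, the sum of `∏ u_i^{−α_i}` over all `s`-tuples `(u₁,…,u_s)` of positive integers
with `u₁ + ⋯ + u_s = n` is at most `C·n^{s−1−∑ α_i}`. -/
theorem stmt_16 (s : ℕ) (hs : 1 ≤ s) (α : Fin s → ℝ) (hα : ∀ i, α i ∈ Set.Ioo (0:ℝ) 1) :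
    ∃ C : ℝ, 0 < C ∧ ∀ n : ℕ, 1 ≤ n →
      ∑ u ∈ (Fintype.piFinset fun _ : Fin s => Finset.Icc 1 n).filter
          (fun u => ∑ i, u i = n),
        ∏ i, (u i : ℝ) ^ (-(α i)) ≤ C * (n : ℝ) ^ ((s : ℝ) - 1 - ∑ i, α i) := by
  obtain ⟨k, rfl⟩ : ∃ k, s = k + 1 := ⟨s - 1, by omega⟩
  have hK : ∀ a ∈ Set.Ioo (0 : ℝ) 1, 0 < 1 + (1 - a)⁻¹ := fun a ha => by
    have := sub_pos.2 ha.2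
    positivity
  refine ⟨∑ i, (k + 1 : ℝ) ^ α i * ∏ j, (1 + (1 - α (i.succAbove j))⁻¹), ?_, fun n hn => ?_⟩
  · exact sum_pos (fun i _ => mul_pos (by positivity) (prod_pos fun j _ => hK _ (hα _)))
      univ_nonempty
  change ∑ u ∈ compositions (k + 1) n, _ ≤ _
  calc _ ≤ ∑ i, ∑ u ∈ compositions (k + 1) n with n ≤ (k + 1) * u i, ∏ j, (u j : ℝ) ^ (-α j) :=
        sum_le_sum_sum_filter_of_forall_exists _ _ _ (fun u _ => by positivity)
          fun u hu => exists_le_mul_of_mem_compositions k.succ_pos hu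
    _ ≤ _ := by
        rw [sum_mul]
        exact sum_le_sum fun i _ => sum_compositions_filter_prod_rpow_neg_le hn α hα i
end
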